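/- arXiv:2210.02117 — 9 statements merged into one kernel-verified Lean document; each statement's English description precedes it below -/
import Mathlib

section
/- For every integer k ≥ 1 and every collection 𝒮 of subsets of [k] = {1,…,k}: 𝒮 belongs to 𝔉_k if and only if one can enumerate 𝒮 = {s_1,…,s_ℓ} (ℓ = |𝒮|) and find pairwise distinct α_1,…,α_ℓ ∈ [k] such that for every i ∈ [ℓ], s_i ∩ {α_1,…,α_ℓ} = {α_i} and every element of s_i is at least α_i. -/
/-- A collection `S` of subsets of `[k] = {1,…,k}` is *echelon*: one can enumerate
`S = {s 0, …, s (|S|-1)}` and find pairwise distinct `α i ∈ [k]` such that for every `i`,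
`s i ∩ {α 0,…,α (|S|-1)} = {α i}` and every element of `s i` is at least `α i`. -/
def Echelon (k : ℕ) (S : Finset (Finset ℕ)) : Prop :=
  ∃ (s : Fin S.card → Finset ℕ) (α : Fin S.card → ℕ),
    Function.Injective s ∧ (∀ i, s i ∈ S) ∧ (∀ t ∈ S, ∃ i, s i = t) ∧
    Function.Injective α ∧ (∀ i, α i ∈ Finset.Icc 1 k) ∧
    (∀ i, s i ∩ Finset.image α Finset.univ = {α i}) ∧
    (∀ i, ∀ x ∈ s i, α i ≤ x)

/-- The family `𝒮 ⊗ n`: it consists of the collection `{s_1,…,s_ℓ, {n}}` together with all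
collections `{s'_1,…,s'_ℓ}` where each `s'_i ∈ {s_i, s_i ∪ {n}}`. -/
def otimes (S : Finset (Finset ℕ)) (n : ℕ) : Set (Finset (Finset ℕ)) :=
  {insert ({n} : Finset ℕ) S} ∪
    {S' | ∃ f : Finset ℕ → Finset ℕ,
      (∀ s ∈ S, f s = s ∨ f s = s ∪ {n}) ∧ S' = S.image f}

/-- The inductively defined families `𝔉_k` of collections of subsets of `[k]`:
`𝔉_1 = {∅, {{1}}}` and `𝔉_{k+1} = ⋃_{𝒮 ∈ 𝔉_k} 𝒮 ⊗ (k+1)`. -/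
def Fam : ℕ → Set (Finset (Finset ℕ))
  | 0 => ∅
  | 1 => {(∅ : Finset (Finset ℕ)), {({1} : Finset ℕ)}}
  | (n + 2) => {S' | ∃ S ∈ Fam (n + 1), S' ∈ otimes S (n + 2)}

/-- Unbundled form of `Echelon`: a choice of `β t` for each `t ∈ S` rather than an
enumeration. -/
def E (k : ℕ) (S : Finset (Finset ℕ)) : Prop :=
  ∃ β : Finset ℕ → ℕ, Set.InjOn β ↑S ∧ ∀ t ∈ S, β t ∈ Finset.Icc 1 k ∧
    t ∩ S.image β = {β t} ∧ ∀ x ∈ t, β t ≤ x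

lemma union_singleton_eq (s : Finset ℕ) (a : ℕ) : s ∪ {a} = insert a s := by
  rw [Finset.union_comm, ← Finset.insert_eq]

lemma echelon_iff_E (k : ℕ) (S : Finset (Finset ℕ)) : Echelon k S ↔ E k S := by
  classical
  constructor
  · rintro ⟨s, α, hsinj, hsmem, hssurj, hαinj, hα1, hα2, hα3⟩
    set β : Finset ℕ → ℕ := fun t => if h : ∃ i, s i = t then α h.choose else 0 with hβdef
    have key : ∀ i, β (s i) = α i := by
      intro i
      have h : ∃ j, s j = s i := ⟨i, rfl⟩
      have hc := h.choose_spec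
      simp only [hβdef, dif_pos h]
      exact congrArg α (hsinj hc)
    have himg : S.image β = Finset.image α Finset.univ := by
      ext x
      simp only [Finset.mem_image, Finset.mem_univ, true_and]
      constructor
      · rintro ⟨t, ht, rfl⟩
        obtain ⟨i, rfl⟩ := hssurj t ht
        exact ⟨i, (key i).symm⟩
      · rintro ⟨i, rfl⟩
        exact ⟨s i, hsmem i, key i⟩
    refine ⟨β, ?_, ?_⟩
    · intro t ht t' ht' h
      obtain ⟨i, rfl⟩ := hssurj t ht
      obtain ⟨j, rfl⟩ := hssurj t' ht'
      rw [key, key] at h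
      exact congrArg s (hαinj h)
    · intro t ht
      obtain ⟨i, rfl⟩ := hssurj t ht
      rw [key, himg]
      exact ⟨hα1 i, hα2 i, hα3 i⟩
  · rintro ⟨β, hinj, h⟩
    set e := S.equivFin.symm with he
    set s : Fin S.card → Finset ℕ := fun i => (e i : Finset ℕ) with hs
    have hsmem : ∀ i, s i ∈ S := fun i => (e i).2
    have hsinj : Function.Injective s := fun i j hij => e.injective (Subtype.ext hij)
    have hssurj : ∀ t ∈ S, ∃ i, s i = t := by
      intro t ht
      exact ⟨e.symm ⟨t, ht⟩, by simp [hs]⟩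
    have himg : Finset.image (fun i => β (s i)) Finset.univ = S.image β := by
      ext x
      simp only [Finset.mem_image, Finset.mem_univ, true_and]
      constructor
      · rintro ⟨i, rfl⟩
        exact ⟨s i, hsmem i, rfl⟩
      · rintro ⟨t, ht, rfl⟩
        obtain ⟨i, rfl⟩ := hssurj t ht
        exact ⟨i, rfl⟩
    refine ⟨s, fun i => β (s i), hsinj, hsmem, hssurj, ?_, ?_, ?_, ?_⟩
    · intro i j hij
      exact hsinj (hinj (hsmem i) (hsmem j) hij)
    · intro i
      exact (h (s i) (hsmem i)).1
    · intro i
      rw [himg]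
      exact (h (s i) (hsmem i)).2.1
    · intro i x hx
      exact (h (s i) (hsmem i)).2.2 x hx

lemma fam_subset : ∀ k, ∀ S ∈ Fam k, ∀ t ∈ S, t ⊆ Finset.Icc 1 k
  | 0 => by intro S hS; exact absurd hS (by simp [Fam])
  | 1 => by
    intro S hS t ht
    simp only [Fam, Set.mem_insert_iff, Set.mem_singleton_iff] at hS
    rcases hS with rfl | rfl
    · simp at ht
    · rw [Finset.mem_singleton] at ht
      subst ht
      intro x hx
      rw [Finset.mem_singleton] at hx
      subst hx
      simp
  | (n + 2) => by
    intro S hS t ht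
    obtain ⟨T, hT, hST⟩ := hS
    have IH := fam_subset (n + 1) T hT
    have hsub : Finset.Icc 1 (n + 1) ⊆ Finset.Icc 1 (n + 2) :=
      Finset.Icc_subset_Icc_right (by omega)
    rcases hST with h | ⟨f, hf, rfl⟩
    · rw [Set.mem_singleton_iff] at h
      subst h
      rcases Finset.mem_insert.mp ht with rfl | ht'
      · intro x hx
        rw [Finset.mem_singleton] at hx
        subst hx
        simp
      · exact (IH t ht').trans hsub
    · obtain ⟨u, hu, rfl⟩ := Finset.mem_image.mp ht
      rcases hf u hu with h | h <;> rw [h]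
      · exact (IH u hu).trans hsub
      · intro x hx
        rcases Finset.mem_union.mp hx with hx | hx
        · exact hsub (IH u hu hx)
        · rw [Finset.mem_singleton] at hx
          subst hx
          simp

lemma main : ∀ n, ∀ S : Finset (Finset ℕ), (∀ t ∈ S, t ⊆ Finset.Icc 1 (n + 1)) →
    (S ∈ Fam (n + 1) ↔ E (n + 1) S)
  | 0 => by
    intro S hS
    constructor
    · intro h
      simp only [Fam, Set.mem_insert_iff, Set.mem_singleton_iff] at h
      rcases h with rfl | rfl
      · exact ⟨fun _ => 0, by simp, by simp⟩
      · refine ⟨fun _ => 1, ?_, ?_⟩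
        · intro a ha b hb _
          simp only [Finset.coe_singleton, Set.mem_singleton_iff] at ha hb
          rw [ha, hb]
        · intro t ht
          rw [Finset.mem_singleton] at ht
          subst ht
          refine ⟨by simp, ?_, by simp⟩
          ext x
          simp
    · rintro ⟨β, hinj, h⟩
      simp only [Fam, Set.mem_insert_iff, Set.mem_singleton_iff]
      have hall : ∀ t ∈ S, t = {1} := by
        intro t ht
        obtain ⟨h1, h2, _⟩ := h t ht
        have hβ1 : β t = 1 := by
          rw [Finset.mem_Icc] at h1; omega
        have h1t : (1 : ℕ) ∈ t := by
          have hm : β t ∈ t ∩ S.image β := by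
            rw [h2]; exact Finset.mem_singleton_self _
          have := (Finset.mem_inter.mp hm).1
          rwa [hβ1] at this
        apply Finset.Subset.antisymm
        · have := hS t ht
          simpa using this
        · intro x hx
          rw [Finset.mem_singleton] at hx
          subst hx
          exact h1t
      have hsub : S ⊆ {({1} : Finset ℕ)} := fun t ht =>
        Finset.mem_singleton.mpr (hall t ht)
      rcases Finset.subset_singleton_iff.mp hsub with h | h
      · left; exact h
      · right; exact h
  | (n + 1) => by
    intro S hS
    have IH := main n
    constructor
    · -- Fam → E
      rintro ⟨T, hTFam, hST⟩
      have hTsub := fam_subset (n + 1) T hTFam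
      have hTnotin : ∀ t ∈ T, (n + 2) ∉ t := by
        intro t ht hmem
        have := hTsub t ht hmem
        rw [Finset.mem_Icc] at this
        omega
      obtain ⟨β, hinj, hβ⟩ := (IH T hTsub).mp hTFam
      have hβle : ∀ t ∈ T, β t ≤ n + 1 := fun t ht =>
        (Finset.mem_Icc.mp (hβ t ht).1).2
      have hβge : ∀ t ∈ T, 1 ≤ β t := fun t ht =>
        (Finset.mem_Icc.mp (hβ t ht).1).1
      have hn2img : (n + 2) ∉ T.image β := by
        simp only [Finset.mem_image, not_exists]
        rintro t ⟨ht, h⟩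
        have := hβle t ht
        omega
      rcases hST with h | ⟨f, hf, rfl⟩
      · -- S = insert {n+2} T
        rw [Set.mem_singleton_iff] at h
        subst h
        have hnotT : ({n + 2} : Finset ℕ) ∉ T := fun hmem =>
          hTnotin _ hmem (Finset.mem_singleton_self _)
        classical
        set β' : Finset ℕ → ℕ := fun u => if u = ({n + 2} : Finset ℕ) then n + 2 else β u
          with hβ'def
        have hval : ∀ t ∈ T, β' t = β t := by
          intro t ht
          simp only [hβ'def]
          rw [if_neg]
          intro h
          subst h
          exact hTnotin _ ht (Finset.mem_singleton_self _)
        have hval2 : β' ({n + 2} : Finset ℕ) = n + 2 := by simp [hβ'def]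
        have himg : (insert ({n + 2} : Finset ℕ) T).image β' =
            insert (n + 2) (T.image β) := by
          rw [Finset.image_insert, hval2, Finset.image_congr hval]
        refine ⟨β', ?_, ?_⟩
        · intro t ht t' ht' h
          simp only [Finset.coe_insert, Set.mem_insert_iff, Finset.mem_coe] at ht ht'
          rcases ht with rfl | ht <;> rcases ht' with rfl | ht'
          · rfl
          · rw [hval2, hval t' ht'] at h
            have := hβle t' ht'
            omega
          · rw [hval2, hval t ht] at h
            have := hβle t ht
            omega
          · exact hinj ht ht' (by rwa [hval t ht, hval t' ht'] at h)
        · intro t ht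
          rw [himg]
          rcases Finset.mem_insert.mp ht with rfl | ht
          · rw [hval2]
            refine ⟨by simp [Finset.mem_Icc], ?_, ?_⟩
            · ext x
              simp only [Finset.mem_inter, Finset.mem_singleton, Finset.mem_insert]
              constructor
              · rintro ⟨rfl, _⟩; rfl
              · rintro rfl; exact ⟨rfl, Or.inl rfl⟩
            · intro x hx
              rw [Finset.mem_singleton] at hx
              omega
          · rw [hval t ht]
            obtain ⟨h1, h2, h3⟩ := hβ t ht
            refine ⟨?_, ?_, h3⟩
            · rw [Finset.mem_Icc] at h1 ⊢
              omega
            · ext x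
              simp only [Finset.mem_inter, Finset.mem_singleton, Finset.mem_insert]
              constructor
              · rintro ⟨hxt, hx⟩
                rcases hx with rfl | hx
                · exact absurd hxt (hTnotin t ht)
                · have : x ∈ t ∩ T.image β := Finset.mem_inter.mpr ⟨hxt, hx⟩
                  rw [h2] at this
                  exact Finset.mem_singleton.mp this
              · rintro rfl
                have : β t ∈ t ∩ T.image β := by
                  rw [h2]; exact Finset.mem_singleton_self _
                obtain ⟨ha, hb⟩ := Finset.mem_inter.mp this
                exact ⟨ha, Or.inr hb⟩
      · -- S = T.image f
        classical
        have herase : ∀ t ∈ T, (f t).erase (n + 2) = t := by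
          intro t ht
          rcases hf t ht with h | h <;> rw [h]
          · exact Finset.erase_eq_of_notMem (hTnotin t ht)
          · rw [union_singleton_eq, Finset.erase_insert (hTnotin t ht)]
        have hfinj : Set.InjOn f ↑T := by
          intro t ht t' ht' h
          rw [← herase t ht, ← herase t' ht', h]
        set β' : Finset ℕ → ℕ := fun u => β (u.erase (n + 2)) with hβ'def
        have hval : ∀ t ∈ T, β' (f t) = β t := by
          intro t ht
          simp only [hβ'def]
          rw [herase t ht]
        have himg : (T.image f).image β' = T.image β := by
          rw [Finset.image_image]
          exact Finset.image_congr (fun t ht => hval t ht)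
        refine ⟨β', ?_, ?_⟩
        · intro u hu u' hu'
          simp only [Finset.coe_image, Set.mem_image, Finset.mem_coe] at hu hu'
          obtain ⟨t, ht, rfl⟩ := hu
          obtain ⟨t', ht', rfl⟩ := hu'
          intro h
          rw [hval t ht, hval t' ht'] at h
          rw [hfinj ht ht' (congrArg f (hinj ht ht' h))]
        · intro u hu
          obtain ⟨t, ht, rfl⟩ := Finset.mem_image.mp hu
          rw [himg, hval t ht]
          obtain ⟨h1, h2, h3⟩ := hβ t ht
          refine ⟨?_, ?_, ?_⟩
          · rw [Finset.mem_Icc] at h1 ⊢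
            omega
          · rcases hf t ht with h | h <;> rw [h]
            · exact h2
            · rw [Finset.union_inter_distrib_right, h2,
                Finset.singleton_inter_of_notMem hn2img, Finset.union_empty]
          · intro x hx
            rcases hf t ht with h | h <;> rw [h] at hx
            · exact h3 x hx
            · rcases Finset.mem_union.mp hx with hx | hx
              · exact h3 x hx
              · rw [Finset.mem_singleton] at hx
                have := hβle t ht
                omega
    · -- E → Fam
      rintro ⟨β, hinj, hβ⟩
      classical
      have hβmem : ∀ t ∈ S, β t ∈ t := by
        intro t ht
        have hm : β t ∈ t ∩ S.image β := by
          rw [(hβ t ht).2.1]; exact Finset.mem_singleton_self _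
        exact (Finset.mem_inter.mp hm).1
      by_cases hcase : ∃ t₀ ∈ S, β t₀ = n + 2
      · obtain ⟨t₀, ht₀, hβt₀⟩ := hcase
        have ht₀eq : t₀ = {n + 2} := by
          apply Finset.Subset.antisymm
          · intro x hx
            have h3 := (hβ t₀ ht₀).2.2 x hx
            have hx2 := hS t₀ ht₀ hx
            rw [Finset.mem_Icc] at hx2
            rw [Finset.mem_singleton]
            omega
          · intro x hx
            rw [Finset.mem_singleton] at hx
            subst hx
            rw [← hβt₀]
            exact hβmem t₀ ht₀
        set T := S.erase ({n + 2} : Finset ℕ) with hTdef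
        have hTS : ∀ t ∈ T, t ∈ S := fun t ht => Finset.mem_of_mem_erase ht
        have hβne : ∀ t ∈ T, β t ≠ n + 2 := by
          intro t ht h
          have : t = t₀ := hinj (hTS t ht) ht₀ (h.trans hβt₀.symm)
          exact Finset.ne_of_mem_erase ht (this.trans ht₀eq)
        have hn2notin : ∀ t ∈ T, (n + 2) ∉ t := by
          intro t ht hmem
          have hm : (n + 2) ∈ t ∩ S.image β :=
            Finset.mem_inter.mpr ⟨hmem, Finset.mem_image.mpr ⟨t₀, ht₀, hβt₀⟩⟩
          rw [(hβ t (hTS t ht)).2.1, Finset.mem_singleton] at hm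
          exact hβne t ht hm.symm
        have hTsub : ∀ t ∈ T, t ⊆ Finset.Icc 1 (n + 1) := by
          intro t ht x hx
          have h1 := hS t (hTS t ht) hx
          rw [Finset.mem_Icc] at h1 ⊢
          have : x ≠ n + 2 := fun h => hn2notin t ht (h ▸ hx)
          omega
        have hTE : E (n + 1) T := by
          refine ⟨β, hinj.mono (by intro x hx; exact hTS x hx), ?_⟩
          intro t ht
          have hts := hTS t ht
          obtain ⟨h1, h2, h3⟩ := hβ t hts
          refine ⟨?_, ?_, h3⟩
          · rw [Finset.mem_Icc] at h1 ⊢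
            have := hβne t ht
            omega
          · apply Finset.Subset.antisymm
            · rw [← h2]
              exact Finset.inter_subset_inter_left
                (Finset.image_subset_image (Finset.erase_subset _ _))
            · intro x hx
              rw [Finset.mem_singleton] at hx
              subst hx
              exact Finset.mem_inter.mpr ⟨hβmem t hts, Finset.mem_image_of_mem β ht⟩
        have hTFam : T ∈ Fam (n + 1) := (IH T hTsub).mpr hTE
        refine ⟨T, hTFam, Or.inl ?_⟩
        rw [Set.mem_singleton_iff, hTdef, Finset.insert_erase (ht₀eq ▸ ht₀)]
      · push_neg at hcase
        have hβle : ∀ t ∈ S, β t ≤ n + 1 := by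
          intro t ht
          have := (Finset.mem_Icc.mp (hβ t ht).1).2
          have := hcase t ht
          omega
        have hn2img : (n + 2) ∉ S.image β := by
          simp only [Finset.mem_image, not_exists]
          rintro t ⟨ht, h⟩
          exact hcase t ht h
        have hinter : ∀ t ∈ S, t.erase (n + 2) ∩ S.image β = t ∩ S.image β := by
          intro t ht
          apply Finset.Subset.antisymm
          · exact Finset.inter_subset_inter_right (Finset.erase_subset _ _)
          · intro x hx
            obtain ⟨hxt, hxi⟩ := Finset.mem_inter.mp hx
            refine Finset.mem_inter.mpr ⟨Finset.mem_erase.mpr ⟨?_, hxt⟩, hxi⟩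
            intro h
            subst h
            exact hn2img hxi
        have hginj : Set.InjOn (fun u : Finset ℕ => u.erase (n + 2)) ↑S := by
          intro t ht t' ht' h
          apply hinj ht ht'
          have e1 := (hβ t ht).2.1
          have e2 := (hβ t' ht').2.1
          have : ({β t} : Finset ℕ) = {β t'} := by
            rw [← e1, ← e2, ← hinter t ht, ← hinter t' ht']
            dsimp at h
            rw [h]
          exact Finset.singleton_injective this
        set T := S.image (fun u : Finset ℕ => u.erase (n + 2)) with hTdef
        set f : Finset ℕ → Finset ℕ := fun u =>
          if u ∪ {n + 2} ∈ S then u ∪ {n + 2} else u with hfdef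
        have hkey : ∀ t ∈ S, f (t.erase (n + 2)) = t := by
          intro t ht
          by_cases hmem : (n + 2) ∈ t
          · have heq : t.erase (n + 2) ∪ {n + 2} = t := by
              rw [union_singleton_eq, Finset.insert_erase hmem]
            simp only [hfdef]
            rw [heq, if_pos ht]
          · have heq : t.erase (n + 2) = t := Finset.erase_eq_of_notMem hmem
            simp only [hfdef]
            rw [heq]
            rw [if_neg]
            intro hin
            have h1 : (t ∪ {n + 2}).erase (n + 2) = t := by
              rw [union_singleton_eq, Finset.erase_insert hmem]
            have h2 : (t ∪ {n + 2}).erase (n + 2) = t.erase (n + 2) := by rw [h1, heq]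
            have := hginj hin ht h2
            rw [union_singleton_eq] at this
            exact hmem (this ▸ Finset.mem_insert_self _ _)
        have hTsub : ∀ u ∈ T, u ⊆ Finset.Icc 1 (n + 1) := by
          intro u hu x hx
          obtain ⟨t, ht, rfl⟩ := Finset.mem_image.mp hu
          obtain ⟨hne, hxt⟩ := Finset.mem_erase.mp hx
          have := hS t ht hxt
          rw [Finset.mem_Icc] at this ⊢
          omega
        have hval : ∀ t ∈ S, β (f (t.erase (n + 2))) = β t := by
          intro t ht
          rw [hkey t ht]
        have hTE : E (n + 1) T := by
          refine ⟨fun u => β (f u), ?_, ?_⟩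
          · intro u hu u' hu'
            simp only [hTdef, Finset.coe_image, Set.mem_image, Finset.mem_coe] at hu hu'
            obtain ⟨t, ht, rfl⟩ := hu
            obtain ⟨t', ht', rfl⟩ := hu'
            intro h
            dsimp only at h
            rw [hval t ht, hval t' ht'] at h
            rw [hinj ht ht' h]
          · intro u hu
            obtain ⟨t, ht, rfl⟩ := Finset.mem_image.mp hu
            have himg : T.image (fun u => β (f u)) = S.image β := by
              rw [hTdef, Finset.image_image]
              exact Finset.image_congr (fun t ht => hval t ht)
            obtain ⟨h1, h2, h3⟩ := hβ t ht
            dsimp only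
            rw [hval t ht, himg]
            refine ⟨?_, ?_, ?_⟩
            · rw [Finset.mem_Icc] at h1 ⊢
              have := hβle t ht
              omega
            · rw [hinter t ht, h2]
            · intro x hx
              exact h3 x (Finset.mem_of_mem_erase hx)
        have hTFam : T ∈ Fam (n + 1) := (IH T hTsub).mpr hTE
        refine ⟨T, hTFam, Or.inr ⟨f, ?_, ?_⟩⟩
        · intro u _
          simp only [hfdef]
          by_cases h : u ∪ {n + 2} ∈ S
          · right; rw [if_pos h]
          · left; rw [if_neg h]
        · rw [hTdef, Finset.image_image]
          have heq : S.image (f ∘ fun u => u.erase (n + 2)) = S.image id :=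
            Finset.image_congr (fun t ht => hkey t ht)
          rw [Finset.image_id] at heq
          exact heq.symm

/-- for every `k ≥ 1` and every collection `S` of subsets of `[k]`,
`S ∈ 𝔉_k` if and only if `S` is echelon. -/
theorem mem_Fam_iff_echelon (k : ℕ) (hk : 1 ≤ k) (S : Finset (Finset ℕ))
    (hS : ∀ s ∈ S, s ⊆ Finset.Icc 1 k) :
    S ∈ Fam k ↔ Echelon k S := by
  obtain ⟨n, rfl⟩ : ∃ n, k = n + 1 := ⟨k - 1, by omega⟩
  rw [echelon_iff_E]
  exact main n S hS
end

section
/- Let k ≥ 1, let 𝒮 be an echelon collection of subsets of [k], and let 𝒳 ⊆ 𝒮. Then there exists t ⊆ [k] such that for every s ∈ 𝒮, the intersection |s ∩ t| is odd if and only if s ∈ 𝒳. -/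
/-- if `S` is an echelon collection of subsets of `[k]` and `X ⊆ S`, then
there is `t ⊆ [k]` such that for every `s ∈ S`, `|s ∩ t|` is odd iff `s ∈ X`. -/
theorem exists_private_neighborhood (k : ℕ) (hk : 1 ≤ k) (S : Finset (Finset ℕ))
    (hS : ∀ s ∈ S, s ⊆ Finset.Icc 1 k) (hE : Echelon k S)
    (X : Finset (Finset ℕ)) (hX : X ⊆ S) :
    ∃ t ⊆ Finset.Icc 1 k, ∀ s ∈ S, (Odd (s ∩ t).card ↔ s ∈ X) := by
  obtain ⟨s, α, hsinj, hsmem, hsurj, hαinj, hαk, hcap, -⟩ := hE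
  refine ⟨Finset.image α (Finset.univ.filter fun i => s i ∈ X), ?_, ?_⟩
  · intro x hx
    obtain ⟨i, -, rfl⟩ := Finset.mem_image.mp hx
    exact hαk i
  · intro u hu
    obtain ⟨i, rfl⟩ := hsurj u hu
    have hαi : α i ∈ s i := by
      have := hcap i
      have : α i ∈ s i ∩ Finset.image α Finset.univ := by
        rw [this]; exact Finset.mem_singleton_self _
      exact (Finset.mem_inter.mp this).1
    have hsub : s i ∩ Finset.image α (Finset.univ.filter fun j => s j ∈ X) ⊆ {α i} := by
      rw [← hcap i]
      intro x hx
      exact Finset.mem_inter.mpr ⟨(Finset.mem_inter.mp hx).1,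
        Finset.image_subset_image (Finset.filter_subset _ _) (Finset.mem_inter.mp hx).2⟩
    constructor
    · intro hodd
      have hne : (s i ∩ Finset.image α (Finset.univ.filter fun j => s j ∈ X)).Nonempty := by
        apply Finset.nonempty_of_ne_empty
        intro h
        rw [h] at hodd
        simp at hodd
      obtain ⟨x, hx⟩ := hne
      have hx' := hsub hx
      rw [Finset.mem_singleton] at hx'
      subst hx'
      obtain ⟨j, hj, hji⟩ := Finset.mem_image.mp (Finset.mem_inter.mp hx).2
      have : j = i := hαinj hji
      subst this
      exact (Finset.mem_filter.mp hj).2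
    · intro hmem
      have hxin : α i ∈ s i ∩ Finset.image α (Finset.univ.filter fun j => s j ∈ X) := by
        refine Finset.mem_inter.mpr ⟨hαi, Finset.mem_image.mpr ⟨i, ?_, rfl⟩⟩
        exact Finset.mem_filter.mpr ⟨Finset.mem_univ i, hmem⟩
      have heq : s i ∩ Finset.image α (Finset.univ.filter fun j => s j ∈ X) = {α i} :=
        Finset.Subset.antisymm hsub (Finset.singleton_subset_iff.mpr hxin)
      rw [heq]
      simp
end

section
/- Let k ≥ 1 and let 𝒮₁ and 𝒮₂ be two distinct echelon collections of subsets of [k]. Then N(𝒮₁) ≠ N(𝒮₂), where N(𝒮) = {t ⊆ [k] : there exists s ∈ 𝒮 with |s ∩ t| odd}. -/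
/-- The neighborhood of a collection `S` of subsets of `[k]` in the universal
`k`-rank cut: all `t ⊆ [k]` such that `|s ∩ t|` is odd for some `s ∈ S`. -/
def cutNbhd (k : ℕ) (S : Finset (Finset ℕ)) : Set (Finset ℕ) :=
  {t | t ⊆ Finset.Icc 1 k ∧ ∃ s ∈ S, Odd (s ∩ t).card}

open Finset

def χ (v : Finset ℕ) : ℕ → ZMod 2 := fun x => if x ∈ v then 1 else 0

lemma chi_inj : Function.Injective χ := by
  intro u v h
  ext x
  have hx := congrFun h x
  by_cases hu : x ∈ u <;> by_cases hv : x ∈ v <;> simp [χ, hu, hv] at hx ⊢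

lemma cast_eq_one (n : ℕ) : (n : ZMod 2) = 1 ↔ n % 2 = 1 := by
  rw [← ZMod.natCast_mod n 2]
  rcases Nat.mod_two_eq_zero_or_one n with h | h <;> rw [h] <;> simp <;> decide

lemma odd_iff_sum (w t : Finset ℕ) : Odd (w ∩ t).card ↔ ∑ y ∈ t, χ w y = 1 := by
  have h0 : w ∩ t = t.filter (· ∈ w) := by ext y; simp [mem_inter, and_comm]
  have h1 : (w ∩ t).card = ∑ y ∈ t, (if y ∈ w then 1 else 0 : ℕ) := by
    rw [h0, Finset.card_filter]
  have h2 : ((w ∩ t).card : ZMod 2) = ∑ y ∈ t, χ w y := by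
    rw [h1]; push_cast [χ, apply_ite (Nat.cast : ℕ → ZMod 2)]; rfl
  rw [Nat.odd_iff, ← cast_eq_one, h2]


lemma zmod2_add_self : ∀ a : ZMod 2, a + a = 0 := by decide
lemma zmod2_eq_of_add : ∀ a b : ZMod 2, a + b = 0 → a = b := by decide
lemma zmod2_eq_one : ∀ a : ZMod 2, a ≠ 0 → a = 1 := by decide

lemma span_mem
    (k : ℕ) (S₁ S₂ : Finset (Finset ℕ))
    (h2 : ∀ w ∈ S₂, w ⊆ Finset.Icc 1 k)
    {n : ℕ} (s : Fin n → Finset ℕ) (α : Fin n → ℕ)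
    (hSs : ∀ w ∈ S₁, ∃ i, s i = w)
    (hsub : ∀ i, s i ⊆ Finset.Icc 1 k)
    (hαk : ∀ i, α i ∈ Finset.Icc 1 k)
    (hcap : ∀ i j, α j ∈ s i ↔ i = j)
    (hα : Function.Injective α)
    (hN : cutNbhd k S₂ ⊆ cutNbhd k S₁)
    (u : Finset ℕ) (hu : u ∈ S₂) :
    ∃ T : Finset (Fin n), χ u = ∑ j ∈ T, χ (s j) := by
  by_contra hcon
  push_neg at hcon
  have chi_s_α : ∀ i j : Fin n, χ (s i) (α j) = if i = j then 1 else 0 := by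
    intro i j
    by_cases h : i = j
    · subst h; simp [χ, (hcap i i).2 rfl]
    · have hm : α j ∉ s i := fun hm => h ((hcap i j).1 hm)
      simp [χ, hm, h]
  set J : Finset (Fin n) := univ.filter (fun j => α j ∈ u) with hJ
  set v : ℕ → ZMod 2 := χ u + ∑ j ∈ J, χ (s j) with hv
  have hvapp : ∀ x, v x = χ u x + ∑ j ∈ J, χ (s j) x := by
    intro x; simp [hv, Finset.sum_apply]
  have hv0 : v ≠ 0 := by
    intro h
    apply hcon J
    funext x
    have hx : v x = 0 := congrFun h x
    rw [hvapp] at hx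
    rw [Finset.sum_apply]
    exact zmod2_eq_of_add _ _ hx
  obtain ⟨x, hx⟩ : ∃ x, v x ≠ 0 := by
    by_contra h; push_neg at h; exact hv0 (funext h)
  have hvα : ∀ i, v (α i) = 0 := by
    intro i
    rw [hvapp]
    have : ∑ j ∈ J, χ (s j) (α i) = if i ∈ J then 1 else 0 := by
      rw [Finset.sum_congr rfl (fun j _ => chi_s_α j i)]
      simp [Finset.sum_ite_eq' J i (fun _ => (1 : ZMod 2))]
    rw [this]
    have hiJ : (i ∈ J) ↔ α i ∈ u := by simp [hJ]
    by_cases h : α i ∈ u <;> simp [χ, h, hiJ.mpr, hiJ, zmod2_add_self]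
  have hxα : ∀ i, x ≠ α i := by
    intro i h; exact hx (h ▸ hvα i)
  have hxk : x ∈ Finset.Icc 1 k := by
    by_contra hxk
    apply hx
    rw [hvapp]
    have h1 : χ u x = 0 := by
      simp only [χ, if_neg (fun h => hxk (h2 u hu h))]
    have h3 : ∑ j ∈ J, χ (s j) x = 0 :=
      Finset.sum_eq_zero fun j _ => by
        simp only [χ, if_neg (fun h => hxk (hsub j h))]
    rw [h1, h3, add_zero]
  set J' : Finset (Fin n) := univ.filter (fun j => x ∈ s j) with hJ'
  set t : Finset ℕ := insert x (J'.image α) with ht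
  have hxim : x ∉ J'.image α := by
    simp only [mem_image]
    rintro ⟨j, -, hj⟩
    exact hxα j hj.symm
  have sum_t : ∀ g : ℕ → ZMod 2, ∑ y ∈ t, g y = g x + ∑ j ∈ J', g (α j) := by
    intro g
    rw [ht, Finset.sum_insert hxim, Finset.sum_image (fun a _ b _ h => hα h)]
  have ht_sub : t ⊆ Finset.Icc 1 k := by
    intro y hy
    rw [ht, mem_insert] at hy
    rcases hy with rfl | hy
    · exact hxk
    · obtain ⟨j, -, rfl⟩ := mem_image.1 hy; exact hαk j
  have h_even : ∀ i, ∑ y ∈ t, χ (s i) y = 0 := by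
    intro i
    rw [sum_t]
    have : ∑ j ∈ J', χ (s i) (α j) = if i ∈ J' then 1 else 0 := by
      rw [Finset.sum_congr rfl (fun j _ => chi_s_α i j)]
      simp [Finset.sum_ite_eq J' i (fun _ => (1 : ZMod 2))]
    rw [this]
    have hiJ : (i ∈ J') ↔ x ∈ s i := by simp [hJ']
    by_cases h : x ∈ s i <;> simp [χ, h, hiJ, zmod2_add_self]
  have ht_not1 : t ∉ cutNbhd k S₁ := by
    rintro ⟨-, w, hw, hodd⟩
    obtain ⟨i, rfl⟩ := hSs w hw
    rw [odd_iff_sum, h_even i] at hodd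
    exact (by decide : (0 : ZMod 2) ≠ 1) hodd
  have h_vt : ∑ y ∈ t, v y = v x := by
    rw [sum_t]
    rw [Finset.sum_congr rfl (fun j _ => hvα j), Finset.sum_const, smul_zero, add_zero]
  have h_vt' : ∑ y ∈ t, v y = ∑ y ∈ t, χ u y := by
    calc ∑ y ∈ t, v y = ∑ y ∈ t, (χ u y + ∑ j ∈ J, χ (s j) y) := by
          exact Finset.sum_congr rfl fun y _ => hvapp y
      _ = ∑ y ∈ t, χ u y + ∑ j ∈ J, ∑ y ∈ t, χ (s j) y := by
          rw [Finset.sum_add_distrib, Finset.sum_comm]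
      _ = ∑ y ∈ t, χ u y := by
          rw [Finset.sum_congr rfl (fun j _ => h_even j), Finset.sum_const, smul_zero, add_zero]
  have h_odd_u : ∑ y ∈ t, χ u y = 1 := by
    rw [← h_vt', h_vt]; exact zmod2_eq_one _ hx
  exact ht_not1 (hN ⟨ht_sub, u, hu, (odd_iff_sum u t).2 h_odd_u⟩)


lemma chi_s_alpha {n : ℕ} (s : Fin n → Finset ℕ) (α : Fin n → ℕ)
    (hcap : ∀ i j, α j ∈ s i ↔ i = j) (i j : Fin n) :
    χ (s i) (α j) = if i = j then 1 else 0 := by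
  by_cases h : i = j
  · subst h; simp [χ, (hcap i i).2 rfl]
  · have hm : α j ∉ s i := fun hm => h ((hcap i j).1 hm)
    simp [χ, hm, h]

lemma mem_iff_of_span {n : ℕ} (s : Fin n → Finset ℕ) (α : Fin n → ℕ)
    (hcap : ∀ i j, α j ∈ s i ↔ i = j) (w : Finset ℕ) (T : Finset (Fin n))
    (hT : χ w = ∑ j ∈ T, χ (s j)) (j : Fin n) :
    α j ∈ w ↔ j ∈ T := by
  have h := congrFun hT (α j)
  rw [Finset.sum_apply] at h
  have h2 : ∑ i ∈ T, χ (s i) (α j) = if j ∈ T then 1 else 0 := by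
    rw [Finset.sum_congr rfl (fun i _ => chi_s_alpha s α hcap i j)]
    exact Finset.sum_ite_eq' T j (fun _ => (1 : ZMod 2))
  rw [h2] at h
  by_cases hj : j ∈ T <;> by_cases hw : α j ∈ w <;>
    simp [χ, hj, hw] at h ⊢

lemma alpha_image_subset (k : ℕ) (S₁ S₂ : Finset (Finset ℕ))
    (h1 : ∀ w ∈ S₁, w ⊆ Finset.Icc 1 k)
    {n₁ n₂ : ℕ} (s₁ : Fin n₁ → Finset ℕ) (α₁ : Fin n₁ → ℕ)
    (s₂ : Fin n₂ → Finset ℕ) (α₂ : Fin n₂ → ℕ)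
    (hsS₁ : ∀ i, s₁ i ∈ S₁)
    (hcap₁ : ∀ i j, α₁ j ∈ s₁ i ↔ i = j)
    (hge₁ : ∀ i, ∀ x ∈ s₁ i, α₁ i ≤ x)
    (hSs₂ : ∀ w ∈ S₂, ∃ i, s₂ i = w)
    (hsub₂ : ∀ i, s₂ i ⊆ Finset.Icc 1 k)
    (hαk₂ : ∀ i, α₂ i ∈ Finset.Icc 1 k)
    (hcap₂ : ∀ i j, α₂ j ∈ s₂ i ↔ i = j)
    (hα₂ : Function.Injective α₂)
    (hge₂ : ∀ i, ∀ x ∈ s₂ i, α₂ i ≤ x)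
    (hN : cutNbhd k S₁ ⊆ cutNbhd k S₂) :
    Finset.image α₁ Finset.univ ⊆ Finset.image α₂ Finset.univ := by
  intro a ha
  obtain ⟨i, -, rfl⟩ := mem_image.1 ha
  obtain ⟨T, hT⟩ := span_mem k S₂ S₁ h1 s₂ α₂ hSs₂ hsub₂ hαk₂ hcap₂ hα₂ hN (s₁ i) (hsS₁ i)
  have key := mem_iff_of_span s₂ α₂ hcap₂ (s₁ i) T hT
  have hαi : α₁ i ∈ s₁ i := (hcap₁ i i).2 rfl
  have hTne : T.Nonempty := by
    rw [Finset.nonempty_iff_ne_empty]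
    rintro rfl
    rw [Finset.sum_empty] at hT
    have h := congrFun hT (α₁ i)
    simp [χ, hαi] at h
  obtain ⟨j₀, hj₀T, hj₀min⟩ := T.exists_min_image α₂ hTne
  have hm1 : α₂ j₀ ∈ s₁ i := (key j₀).2 hj₀T
  have hle1 : α₁ i ≤ α₂ j₀ := hge₁ i _ hm1
  have h3 : ∃ j ∈ T, α₁ i ∈ s₂ j := by
    by_contra h
    push_neg at h
    have hz : ∑ j ∈ T, χ (s₂ j) (α₁ i) = 0 :=
      Finset.sum_eq_zero fun j hj => by simp [χ, h j hj]
    have hc := congrFun hT (α₁ i)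
    rw [Finset.sum_apply, hz] at hc
    simp [χ, hαi] at hc
  obtain ⟨j, hjT, hj⟩ := h3
  have : α₁ i = α₂ j₀ :=
    le_antisymm hle1 (le_trans (hj₀min j hjT) (hge₂ j _ hj))
  exact mem_image.2 ⟨j₀, mem_univ _, this.symm⟩

lemma S_subset_S (k : ℕ) (S₁ S₂ : Finset (Finset ℕ))
    (h1 : ∀ w ∈ S₁, w ⊆ Finset.Icc 1 k)
    {n₁ n₂ : ℕ} (s₁ : Fin n₁ → Finset ℕ) (α₁ : Fin n₁ → ℕ)
    (s₂ : Fin n₂ → Finset ℕ) (α₂ : Fin n₂ → ℕ)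
    (hSs₁ : ∀ w ∈ S₁, ∃ i, s₁ i = w)
    (hinter₁ : ∀ i, s₁ i ∩ Finset.image α₁ Finset.univ = {α₁ i})
    (hsS₂ : ∀ i, s₂ i ∈ S₂)
    (hSs₂ : ∀ w ∈ S₂, ∃ i, s₂ i = w)
    (hsub₂ : ∀ i, s₂ i ⊆ Finset.Icc 1 k)
    (hαk₂ : ∀ i, α₂ i ∈ Finset.Icc 1 k)
    (hcap₂ : ∀ i j, α₂ j ∈ s₂ i ↔ i = j)
    (hα₂ : Function.Injective α₂)
    (hA : Finset.image α₁ Finset.univ = Finset.image α₂ Finset.univ)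
    (hN : cutNbhd k S₁ ⊆ cutNbhd k S₂) :
    S₁ ⊆ S₂ := by
  intro w hw
  obtain ⟨i, rfl⟩ := hSs₁ w hw
  obtain ⟨T, hT⟩ := span_mem k S₂ S₁ h1 s₂ α₂ hSs₂ hsub₂ hαk₂ hcap₂ hα₂ hN (s₁ i) hw
  have key := mem_iff_of_span s₂ α₂ hcap₂ (s₁ i) T hT
  have himg : T.image α₂ = s₁ i ∩ Finset.image α₂ Finset.univ := by
    ext a
    simp only [mem_image, mem_inter]
    constructor
    · rintro ⟨j, hj, rfl⟩
      exact ⟨(key j).2 hj, ⟨j, mem_univ _, rfl⟩⟩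
    · rintro ⟨haw, j, -, rfl⟩
      exact ⟨j, (key j).1 haw, rfl⟩
  have hcard : T.card = 1 := by
    rw [← Finset.card_image_of_injective T hα₂, himg, ← hA, hinter₁ i,
      Finset.card_singleton]
  obtain ⟨j₀, rfl⟩ := Finset.card_eq_one.1 hcard
  rw [Finset.sum_singleton] at hT
  have : s₁ i = s₂ j₀ := chi_inj hT
  rw [this]
  exact hsS₂ j₀

/-- two distinct echelon collections of subsets of `[k]` have distinct
neighborhoods in the universal `k`-rank cut. -/
theorem cutNbhd_ne_of_echelon_ne (k : ℕ) (hk : 1 ≤ k)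
    (S₁ S₂ : Finset (Finset ℕ))
    (h1 : ∀ s ∈ S₁, s ⊆ Finset.Icc 1 k) (h2 : ∀ s ∈ S₂, s ⊆ Finset.Icc 1 k)
    (hE1 : Echelon k S₁) (hE2 : Echelon k S₂) (hne : S₁ ≠ S₂) :
    cutNbhd k S₁ ≠ cutNbhd k S₂ := by
  intro heq
  apply hne
  obtain ⟨s₁, α₁, -, hsS₁, hSs₁, hα₁, hαk₁, hinter₁, hge₁⟩ := hE1
  obtain ⟨s₂, α₂, -, hsS₂, hSs₂, hα₂, hαk₂, hinter₂, hge₂⟩ := hE2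
  have hcap : ∀ {n : ℕ} (s : Fin n → Finset ℕ) (α : Fin n → ℕ),
      Function.Injective α →
      (∀ i, s i ∩ Finset.image α Finset.univ = {α i}) →
      ∀ i j, α j ∈ s i ↔ i = j := by
    intro n s α hα hinter i j
    constructor
    · intro h
      have hm : α j ∈ s i ∩ Finset.image α Finset.univ :=
        Finset.mem_inter.2 ⟨h, Finset.mem_image.2 ⟨j, Finset.mem_univ _, rfl⟩⟩
      rw [hinter i, Finset.mem_singleton] at hm
      exact (hα hm).symm
    · rintro rfl
      have hm : α i ∈ s i ∩ Finset.image α Finset.univ := by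
        rw [hinter i]; exact Finset.mem_singleton_self _
      exact (Finset.mem_inter.1 hm).1
  have hcap₁ := hcap s₁ α₁ hα₁ hinter₁
  have hcap₂ := hcap s₂ α₂ hα₂ hinter₂
  have hsub₁ : ∀ i, s₁ i ⊆ Finset.Icc 1 k := fun i => h1 _ (hsS₁ i)
  have hsub₂ : ∀ i, s₂ i ⊆ Finset.Icc 1 k := fun i => h2 _ (hsS₂ i)
  have hN12 : cutNbhd k S₁ ⊆ cutNbhd k S₂ := by rw [heq]
  have hN21 : cutNbhd k S₂ ⊆ cutNbhd k S₁ := by rw [heq]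
  have hA : Finset.image α₁ Finset.univ = Finset.image α₂ Finset.univ :=
    Finset.Subset.antisymm
      (alpha_image_subset k S₁ S₂ h1 s₁ α₁ s₂ α₂ hsS₁ hcap₁ hge₁ hSs₂ hsub₂ hαk₂
        hcap₂ hα₂ hge₂ hN12)
      (alpha_image_subset k S₂ S₁ h2 s₂ α₂ s₁ α₁ hsS₂ hcap₂ hge₂ hSs₁ hsub₁ hαk₁
        hcap₁ hα₁ hge₁ hN21)
  exact Finset.Subset.antisymm
    (S_subset_S k S₁ S₂ h1 s₁ α₁ s₂ α₂ hSs₁ hinter₁ hsS₂ hSs₂ hsub₂ hαk₂ hcap₂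
      hα₂ hA hN12)
    (S_subset_S k S₂ S₁ h2 s₂ α₂ s₁ α₁ hSs₂ hinter₂ hsS₁ hSs₁ hsub₁ hαk₁ hcap₁
      hα₁ hA.symm hN21)
end

section
/- Let k ≥ 1 and let 𝒮 be an echelon collection of subsets of [k]. Then |N(𝒮)| = 2^k − 2^{k−|𝒮|}, where N(𝒮) = {t ⊆ [k] : there exists s ∈ 𝒮 with |s ∩ t| odd}. -/
/-- an echelon collection `S` of subsets of `[k]` satisfies
`|N(S)| = 2^k − 2^(k − |S|)`. -/
theorem ncard_cutNbhd_echelon (k : ℕ) (hk : 1 ≤ k) (S : Finset (Finset ℕ))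
    (hS : ∀ s ∈ S, s ⊆ Finset.Icc 1 k) (hE : Echelon k S) :
    (cutNbhd k S).ncard = 2 ^ k - 2 ^ (k - S.card) := by
  classical
  obtain ⟨s, α, hsinj, hsS, hsurj, hαinj, hαk, hsa, hmin⟩ := hE
  set A : Finset ℕ := Finset.image α Finset.univ with hA
  set B : Finset ℕ := Finset.Icc 1 k \ A with hB
  have hAsub : A ⊆ Finset.Icc 1 k := by
    intro x hx
    rw [hA, Finset.mem_image] at hx
    obtain ⟨i, _, rfl⟩ := hx
    exact hαk i
  have hAcard : A.card = S.card := by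
    rw [hA, Finset.card_image_of_injective _ hαinj, Finset.card_univ, Fintype.card_fin]
  have hBcard : B.card = k - S.card := by
    rw [hB, Finset.card_sdiff_of_subset hAsub, hAcard, Nat.card_Icc]
    omega
  have hmemA : ∀ (i : Fin S.card) (x : ℕ), x ∈ s i ∧ x ∈ A ↔ x = α i := by
    intro i x
    rw [← Finset.mem_inter, hsa i, Finset.mem_singleton]
  have hαA : ∀ i : Fin S.card, α i ∈ A := by
    intro i; rw [hA]; exact Finset.mem_image_of_mem α (Finset.mem_univ i)
  -- key parity decomposition
  have key : ∀ (i : Fin S.card) (t : Finset ℕ),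
      (s i ∩ t).card = (s i ∩ (t \ A)).card + ({α i} ∩ t).card := by
    intro i t
    have hdis : Disjoint (s i ∩ (t \ A)) ({α i} ∩ t) := by
      rw [Finset.disjoint_left]
      intro x hx hx2
      rw [Finset.mem_inter, Finset.mem_sdiff] at hx
      rw [Finset.mem_inter, Finset.mem_singleton] at hx2
      exact hx.2.2 (hx2.1 ▸ hαA i)
    rw [← Finset.card_union_of_disjoint hdis]
    congr 1
    ext x
    simp only [Finset.mem_inter, Finset.mem_union, Finset.mem_sdiff, Finset.mem_singleton]
    constructor
    · rintro ⟨hx, ht⟩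
      by_cases hxA : x ∈ A
      · exact Or.inr ⟨(hmemA i x).1 ⟨hx, hxA⟩, ht⟩
      · exact Or.inl ⟨hx, ht, hxA⟩
    · rintro (⟨hx, ht, _⟩ | ⟨rfl, ht⟩)
      · exact ⟨hx, ht⟩
      · exact ⟨((hmemA i (α i)).2 rfl).1, ht⟩
  -- the correction map
  set V : Finset ℕ → Finset ℕ :=
    fun u => Finset.image α (Finset.univ.filter (fun i => Odd ((s i ∩ u)).card)) with hV
  have hVA : ∀ u, V u ⊆ A := by
    intro u x hx
    rw [hV, Finset.mem_image] at hx
    obtain ⟨i, _, rfl⟩ := hx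
    exact hαA i
  have hVmem : ∀ (u : Finset ℕ) (i : Fin S.card), α i ∈ V u ↔ Odd ((s i ∩ u)).card := by
    intro u i
    rw [hV, Finset.mem_image]
    constructor
    · rintro ⟨j, hj, hji⟩
      rw [Finset.mem_filter] at hj
      exact (hαinj hji) ▸ hj.2
    · intro h
      exact ⟨i, Finset.mem_filter.2 ⟨Finset.mem_univ i, h⟩, rfl⟩
  have hsdiff : ∀ u : Finset ℕ, u ⊆ B → (u ∪ V u) \ A = u := by
    intro u hu
    ext x
    simp only [Finset.mem_sdiff, Finset.mem_union]
    constructor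
    · rintro ⟨h1 | h1, h2⟩
      · exact h1
      · exact absurd (hVA u h1) h2
    · intro hx
      have := hu hx
      rw [hB, Finset.mem_sdiff] at this
      exact ⟨Or.inl hx, this.2⟩
  set N : Finset (Finset ℕ) :=
    (Finset.Icc 1 k).powerset.filter (fun t => ∃ s' ∈ S, Odd ((s' ∩ t)).card) with hN
  set K : Finset (Finset ℕ) :=
    (Finset.Icc 1 k).powerset.filter (fun t => ¬ ∃ s' ∈ S, Odd ((s' ∩ t)).card) with hK
  have hKmem : ∀ t, t ∈ K ↔ t ⊆ Finset.Icc 1 k ∧ ∀ i, Even ((s i ∩ t)).card := by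
    intro t
    rw [hK, Finset.mem_filter, Finset.mem_powerset]
    constructor
    · rintro ⟨h1, h2⟩
      push_neg at h2
      exact ⟨h1, fun i => Nat.not_odd_iff_even.1 (h2 (s i) (hsS i))⟩
    · rintro ⟨h1, h2⟩
      refine ⟨h1, ?_⟩
      push_neg
      intro s' hs'
      obtain ⟨i, rfl⟩ := hsurj s' hs'
      exact Nat.not_odd_iff_even.2 (h2 i)
  -- K has the same card as the powerset of B
  have hKcard : K.card = 2 ^ (k - S.card) := by
    rw [← hBcard, ← Finset.card_powerset]
    apply Finset.card_bij' (fun t _ => t \ A) (fun u _ => u ∪ V u)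
    · intro t ht
      rw [Finset.mem_powerset, hB]
      exact Finset.sdiff_subset_sdiff ((hKmem t).1 ht).1 (le_refl A)
    · intro u hu
      rw [Finset.mem_powerset] at hu
      rw [hKmem]
      constructor
      · apply Finset.union_subset
        · exact hu.trans (hB ▸ Finset.sdiff_subset)
        · exact (hVA u).trans hAsub
      · intro i
        have h1 : (u ∪ V u) \ A = u := hsdiff u hu
        have h2 : α i ∉ u := by
          intro hc
          have := hu hc
          rw [hB, Finset.mem_sdiff] at this
          exact this.2 (hαA i)
        rw [key i, h1]
        by_cases hodd : Odd ((s i ∩ u)).card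
        · have : ({α i} ∩ (u ∪ V u)) = {α i} :=
            Finset.singleton_inter_of_mem (Finset.mem_union_right u ((hVmem u i).2 hodd))
          rw [this, Finset.card_singleton]
          rw [Nat.odd_iff] at hodd
          rw [Nat.even_iff]
          omega
        · have hni : α i ∉ u ∪ V u := by
            rw [Finset.mem_union]
            rintro (h | h)
            · exact h2 h
            · exact hodd ((hVmem u i).1 h)
          rw [Finset.singleton_inter_of_notMem hni, Finset.card_empty]
          rw [Nat.not_odd_iff_even] at hodd
          rwa [Nat.add_zero]
    · intro t ht
      rw [hKmem] at ht
      obtain ⟨hsub, heven⟩ := ht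
      have hiff : ∀ i : Fin S.card, Odd ((s i ∩ (t \ A))).card ↔ α i ∈ t := by
        intro i
        have he := heven i
        rw [key i t] at he
        by_cases hm : α i ∈ t
        · rw [Finset.singleton_inter_of_mem hm, Finset.card_singleton] at he
          rw [Nat.even_iff] at he
          rw [Nat.odd_iff]
          simp only [hm, iff_true]
          omega
        · rw [Finset.singleton_inter_of_notMem hm, Finset.card_empty, Nat.add_zero] at he
          rw [Nat.even_iff] at he
          rw [Nat.odd_iff]
          simp only [hm, iff_false]
          omega
      have hVeq : V (t \ A) = t ∩ A := by
        ext x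
        rw [Finset.mem_inter]
        constructor
        · intro hx
          rw [hV, Finset.mem_image] at hx
          obtain ⟨i, hi, rfl⟩ := hx
          rw [Finset.mem_filter] at hi
          exact ⟨(hiff i).1 hi.2, hαA i⟩
        · rintro ⟨hxt, hxA⟩
          rw [hA, Finset.mem_image] at hxA
          obtain ⟨i, _, rfl⟩ := hxA
          exact (hVmem (t \ A) i).2 ((hiff i).2 hxt)
      rw [hVeq, Finset.sdiff_union_inter]
    · intro u hu
      rw [Finset.mem_powerset] at hu
      exact hsdiff u hu
  -- identify cutNbhd with N
  have hcut : cutNbhd k S = ↑N := by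
    ext t
    rw [hN]
    simp only [cutNbhd, Set.mem_setOf_eq, Finset.coe_filter, Finset.mem_powerset,
      Set.mem_setOf_eq]
  have hsum : N.card + K.card = 2 ^ k := by
    rw [hN, hK]
    rw [Finset.card_filter_add_card_filter_not, Finset.card_powerset, Nat.card_Icc]
    norm_num
  rw [hcut, Set.ncard_coe_finset]
  omega
end

section
/- Let k ≥ 1 and let f, g : {(i,j) : i ∈ [k], j ∈ [k+1,2k]} → {0,1} be two assignments. Define 𝒮_f = { {i} ∪ {j ∈ [k+1,2k] : f(i,j) = 1} : i ∈ [k] } and 𝒮_g analogously. Then N(𝒮_f) = N(𝒮_g) if and only if f = g, where N(𝒮) = {t ⊆ [2k] : there exists s ∈ 𝒮 with |s ∩ t| odd}. -/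
/-- The collection `𝒮_f` associated with an assignment `f` of the variables
`{v_{i,j} : i ∈ [k], j ∈ [k+1,2k]}`: it consists of the sets
`{i} ∪ {j ∈ [k+1,2k] : f i j = 1}` for `i ∈ [k]`. -/
def assignColl (k : ℕ) (f : ℕ → ℕ → Bool) : Finset (Finset ℕ) :=
  (Finset.Icc 1 k).image fun i =>
    insert i ((Finset.Icc (k + 1) (2 * k)).filter fun j => f i j = true)

/-- The neighborhood of a collection `S` of subsets of `[2k]` in the universal
`2k`-rank cut: all `t ⊆ [2k]` such that `|s ∩ t|` is odd for some `s ∈ S`. -/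
def cutNbhd2 (k : ℕ) (S : Finset (Finset ℕ)) : Set (Finset ℕ) :=
  {t | t ⊆ Finset.Icc 1 (2 * k) ∧ ∃ s ∈ S, Odd (s ∩ t).card}

lemma inter_card_aux (k i j : ℕ) (hik : i ∈ Finset.Icc 1 k)
    (hjk : j ∈ Finset.Icc (k + 1) (2 * k)) (f g : ℕ → ℕ → Bool) :
    ((insert i ((Finset.Icc (k + 1) (2 * k)).filter fun j' => f i j' = true)) ∩
      (insert j ((Finset.Icc 1 k).filter fun a => g a j = true))).card =
      (if g i j then 1 else 0) + (if f i j then 1 else 0) := by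
  simp only [Finset.mem_Icc] at hik hjk
  have hij : i ≠ j := by omega
  have hset : ((insert i ((Finset.Icc (k + 1) (2 * k)).filter fun j' => f i j' = true)) ∩
      (insert j ((Finset.Icc 1 k).filter fun a => g a j = true))) =
      (if g i j then {i} else ∅) ∪ (if f i j then {j} else ∅) := by
    ext x
    simp only [Finset.mem_inter, Finset.mem_insert, Finset.mem_filter, Finset.mem_Icc,
      Finset.mem_union]
    constructor
    · rintro ⟨h1 | ⟨⟨hx1, hx2⟩, hfx⟩, h2 | ⟨⟨hy1, hy2⟩, hgx⟩⟩
      · omega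
      · subst h1; simp [hgx]
      · subst h2; simp [hfx]
      · omega
    · intro hx
      rcases hx with hx | hx
      · split at hx
        · simp only [Finset.mem_singleton] at hx; subst hx
          constructor
          · left; rfl
          · right; exact ⟨⟨hik.1, hik.2⟩, by assumption⟩
        · simp at hx
      · split at hx
        · simp only [Finset.mem_singleton] at hx; subst hx
          constructor
          · right; exact ⟨⟨hjk.1, hjk.2⟩, by assumption⟩
          · left; rfl
        · simp at hx
  rw [hset, Finset.card_union_of_disjoint]
  · split <;> split <;> simp
  · split <;> split <;> simp [hij, Ne.symm hij]

/-- for assignments `f, g` of the variables `{v_{i,j} : i ∈ [k], j ∈ [k+1,2k]}`,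
the neighborhoods of `𝒮_f` and `𝒮_g` in the universal `2k`-rank cut coincide if and only if
`f` and `g` agree on all the variables. -/
theorem cutNbhd_assign_eq_iff (k : ℕ) (hk : 1 ≤ k) (f g : ℕ → ℕ → Bool) :
    cutNbhd2 k (assignColl k f) = cutNbhd2 k (assignColl k g) ↔
      ∀ i ∈ Finset.Icc 1 k, ∀ j ∈ Finset.Icc (k + 1) (2 * k), f i j = g i j := by
  constructor
  · intro h i hi j hj
    by_contra hne
    -- test set: t = {j} ∪ {a ∈ [k] : f a j}
    set t : Finset ℕ := insert j ((Finset.Icc 1 k).filter fun a => f a j = true) with ht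
    have htsub : t ⊆ Finset.Icc 1 (2 * k) := by
      intro x hx
      simp only [ht, Finset.mem_insert, Finset.mem_filter, Finset.mem_Icc] at hx
      simp only [Finset.mem_Icc] at hj hi ⊢
      rcases hx with hx | hx
      · omega
      · omega
    have hmemg : t ∈ cutNbhd2 k (assignColl k g) := by
      refine ⟨htsub, ?_⟩
      refine ⟨insert i ((Finset.Icc (k + 1) (2 * k)).filter fun j' => g i j' = true),
        Finset.mem_image_of_mem _ hi, ?_⟩
      rw [ht, inter_card_aux k i j hi hj g f]
      cases hfij : f i j <;> cases hgij : g i j <;> simp_all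
    rw [← h] at hmemg
    obtain ⟨-, s, hs, hodd⟩ := hmemg
    simp only [assignColl, Finset.mem_image] at hs
    obtain ⟨i', hi', rfl⟩ := hs
    rw [ht, inter_card_aux k i' j hi' hj f f] at hodd
    cases hfi'j : f i' j <;> simp [hfi'j, Nat.odd_iff] at hodd
  · intro h
    have : assignColl k f = assignColl k g := by
      unfold assignColl
      apply Finset.image_congr
      intro i hi
      dsimp only
      congr 1
      apply Finset.filter_congr
      intro j hj
      simp [h i (Finset.mem_coe.mp hi) j hj]
    rw [this]
end

section
/- Let k ≥ 1, m ≥ 1, let φ be a 3-CNF formula with clauses C_1,…,C_m over the variables {v_{i,j} : i ∈ [k], j ∈ [k+1,2k]}, and let G = G(φ) be the weighted graph of the independent-set reduction. Then φ is satisfiable if and only if G admits an independent set of total weight at least 2^{2k}·k·m + 2^k + m. -/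
/-- A literal: a variable index `(i, j)` together with a sign (`true` = positive). -/
abbrev Lit : Type := (ℕ × ℕ) × Bool

/-- The literal `ℓ` is over a variable `v_{i,j}` with `i ∈ [k]` and `j ∈ [k+1,2k]`. -/
def LitOK (k : ℕ) (ℓ : Lit) : Prop :=
  ℓ.1.1 ∈ Finset.Icc 1 k ∧ ℓ.1.2 ∈ Finset.Icc (k + 1) (2 * k)

/-- The assignment `f` makes the literal `ℓ` true. -/
def litSat (f : ℕ → ℕ → Bool) (ℓ : Lit) : Prop := f ℓ.1.1 ℓ.1.2 = ℓ.2

/-- Negation of a literal. -/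
def negLit (ℓ : Lit) : Lit := (ℓ.1, !ℓ.2)

/-- `s ∈ 𝒮_ℓ`: for `ℓ = v_{i,j}` this means `s ∩ [k] = {i}` and `j ∈ s`; for
`ℓ = ¬v_{i,j}` it means `s ∩ [k] = {i}` and `j ∉ s`. -/
def memSLit (k : ℕ) (ℓ : Lit) (s : Finset ℕ) : Prop :=
  s ∩ Finset.Icc 1 k = {ℓ.1.1} ∧ (if ℓ.2 = true then ℓ.1.2 ∈ s else ℓ.1.2 ∉ s)

/-- `𝒮 = {s ⊆ [2k] : |s ∩ [k]| = 1}`. -/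
abbrev SS (k : ℕ) : Finset (Finset ℕ) :=
  (Finset.Icc 1 (2 * k)).powerset.filter fun s => (s ∩ Finset.Icc 1 k).card = 1

/-- The powerset of `[2k]`, indexing the side `B = B^{2k}`. -/
abbrev PP (k : ℕ) : Finset (Finset ℕ) := (Finset.Icc 1 (2 * k)).powerset

/-- Vertices of the independent-set reduction graph: `a^i_s` (for `i ∈ [m]`, `s ∈ 𝒮`),
`b_t` (for `t ⊆ [2k]`), and `c^i_ℓ` (for `i ∈ [m]` and the three literals of `C_i`). -/
abbrev ISVertex (k m : ℕ) : Type :=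
  (Fin m × ↥(SS k)) ⊕ ↥(PP k) ⊕ (Fin m × Fin 3)

/-- The adjacency-generating relation of the independent-set reduction graph:
each `A_i[𝒮_j]` is a clique; `a^i_s ∼ b_t` iff `|s ∩ t|` is odd; each `T_i` is a
triangle; and `c^i_ℓ ∼ a^i_s` for every `s ∈ 𝒮_{¬ℓ}`. -/
def isRel (k m : ℕ) (C : Fin m → Fin 3 → Lit) :
    ISVertex k m → ISVertex k m → Prop
  | Sum.inl (i, s), Sum.inl (i', s') =>
      i = i' ∧ s.val ∩ Finset.Icc 1 k = s'.val ∩ Finset.Icc 1 k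
  | Sum.inl (_, s), Sum.inr (Sum.inl t) => Odd (s.val ∩ t.val).card
  | Sum.inr (Sum.inr (i, _)), Sum.inr (Sum.inr (i', _)) => i = i'
  | Sum.inr (Sum.inr (i, q)), Sum.inl (i', s) =>
      i = i' ∧ memSLit k (negLit (C i q)) s.val
  | _, _ => False

/-- The graph `G(φ)` of the independent-set reduction. -/
def ISGraph (k m : ℕ) (C : Fin m → Fin 3 → Lit) : SimpleGraph (ISVertex k m) :=
  SimpleGraph.fromRel (isRel k m C)

/-- The weights: vertices `a^i_s` have weight `2^{2k}`, all other vertices weight `1`. -/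
def isWeight (k m : ℕ) : ISVertex k m → ℕ
  | Sum.inl _ => 2 ^ (2 * k)
  | Sum.inr _ => 1

/-- A finite set of vertices is independent in `G`. -/
def IsIndepFinset {V : Type*} (G : SimpleGraph V) (I : Finset V) : Prop :=
  ∀ x ∈ I, ∀ y ∈ I, ¬ G.Adj x y


namespace IS9
open Finset

lemma mem_of_trace {k j : ℕ} {s : Finset ℕ} (h : s ∩ Finset.Icc 1 k = {j}) :
    j ∈ Finset.Icc 1 k ∧ j ∈ s := by
  have hj : j ∈ s ∩ Finset.Icc 1 k := h ▸ Finset.mem_singleton_self j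
  exact ⟨(Finset.mem_inter.1 hj).2, (Finset.mem_inter.1 hj).1⟩

lemma split_card {k j : ℕ} {s : Finset ℕ} (h1 : s ∩ Finset.Icc 1 k = {j})
    (hs : s ⊆ Finset.Icc 1 (2*k)) (t : Finset ℕ) :
    (s ∩ t).card = ({j} ∩ t).card + (s ∩ (t ∩ Finset.Icc (k+1) (2*k))).card := by
  have hj := mem_of_trace h1
  have cover : s ∩ t = ({j} ∩ t) ∪ (s ∩ (t ∩ Finset.Icc (k+1) (2*k))) := by
    ext x
    simp only [Finset.mem_inter, Finset.mem_union, Finset.mem_singleton, Finset.mem_Icc]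
    constructor
    · rintro ⟨hxs, hxt⟩
      rcases Finset.mem_Icc.1 (hs hxs) with ⟨h1x, h2x⟩
      by_cases hxk : x ≤ k
      · left
        have hx : x ∈ s ∩ Finset.Icc 1 k :=
          Finset.mem_inter.2 ⟨hxs, Finset.mem_Icc.2 ⟨h1x, hxk⟩⟩
        rw [h1, Finset.mem_singleton] at hx
        exact ⟨hx, hxt⟩
      · exact Or.inr ⟨hxs, hxt, by omega, h2x⟩
    · rintro (⟨rfl, hxt⟩ | ⟨hxs, hxt, -⟩)
      · exact ⟨hj.2, hxt⟩
      · exact ⟨hxs, hxt⟩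
  have hdisj : Disjoint ({j} ∩ t) (s ∩ (t ∩ Finset.Icc (k+1) (2*k))) := by
    rw [Finset.disjoint_left]
    intro x hx hx'
    have h1x := Finset.mem_singleton.1 (Finset.mem_inter.1 hx).1
    have h2x := Finset.mem_Icc.1 (Finset.mem_inter.1 (Finset.mem_inter.1 hx').2).2
    have := Finset.mem_Icc.1 hj.1
    omega
  rw [cover, Finset.card_union_of_disjoint hdisj]

lemma mem_iff_odd {k j : ℕ} {s t : Finset ℕ} (h1 : s ∩ Finset.Icc 1 k = {j})
    (hs : s ⊆ Finset.Icc 1 (2*k)) (he : Even ((s ∩ t).card)) :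
    j ∈ t ↔ Odd ((s ∩ (t ∩ Finset.Icc (k+1) (2*k))).card) := by
  have hsplit := split_card h1 hs t
  rw [Nat.even_iff] at he
  rw [Nat.odd_iff]
  by_cases hj : j ∈ t
  · rw [Finset.singleton_inter_of_mem hj] at hsplit
    simp only [Finset.card_singleton] at hsplit
    constructor
    · intro _; omega
    · intro _; exact hj
  · rw [Finset.singleton_inter_of_notMem hj] at hsplit
    simp only [Finset.card_empty] at hsplit
    constructor
    · intro h; exact absurd h hj
    · intro h; omega

lemma indep_of {V : Type*} (r : V → V → Prop) (I : Finset V)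
    (h : ∀ x ∈ I, ∀ y ∈ I, x ≠ y → ¬ r x y) :
    ∀ x ∈ I, ∀ y ∈ I, ¬ (SimpleGraph.fromRel r).Adj x y := by
  intro x hx y hy hadj
  rw [SimpleGraph.fromRel_adj] at hadj
  obtain ⟨hne, hr | hr⟩ := hadj
  · exact h x hx y hy hne hr
  · exact h y hy x hx hne.symm hr

end IS9
namespace IS9

lemma rowS_facts (k : ℕ) (f : ℕ → ℕ → Bool) :
    ∀ j ∈ Finset.Icc 1 k,
      (insert j ((Finset.Icc (k+1) (2*k)).filter fun j' => f j j' = true)) ⊆ Finset.Icc 1 (2*k) ∧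
      (insert j ((Finset.Icc (k+1) (2*k)).filter fun j' => f j j' = true)) ∩ Finset.Icc 1 k = {j} ∧
      (∀ j' ∈ Finset.Icc (k+1) (2*k),
        (j' ∈ insert j ((Finset.Icc (k+1) (2*k)).filter fun j' => f j j' = true) ↔ f j j' = true)) := by
  intro j hj
  rw [Finset.mem_Icc] at hj
  refine ⟨?_, ?_, ?_⟩
  · intro x hx
    rcases Finset.mem_insert.1 hx with rfl | hx
    · rw [Finset.mem_Icc]; omega
    · have := (Finset.mem_filter.1 hx).1
      rw [Finset.mem_Icc] at this ⊢; omega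
  · ext x
    simp only [Finset.mem_inter, Finset.mem_insert, Finset.mem_filter, Finset.mem_singleton,
      Finset.mem_Icc]
    constructor
    · rintro ⟨rfl | ⟨⟨h1, h2⟩, -⟩, hxL⟩
      · rfl
      · omega
    · rintro rfl; exact ⟨Or.inl rfl, by omega⟩
  · intro j' hj'
    rw [Finset.mem_Icc] at hj'
    simp only [Finset.mem_insert, Finset.mem_filter, Finset.mem_Icc]
    constructor
    · rintro (rfl | ⟨-, h⟩)
      · omega
      · exact h
    · intro h; exact Or.inr ⟨⟨hj'.1, hj'.2⟩, h⟩

lemma forward (k m : ℕ) (hk : 1 ≤ k) (hm : 1 ≤ m)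
    (C : Fin m → Fin 3 → Lit) (hC : ∀ p q, LitOK k (C p q))
    (f : ℕ → ℕ → Bool) (hf : ∀ p, ∃ q, litSat f (C p q)) :
    ∃ I : Finset (ISVertex k m), IsIndepFinset (ISGraph k m C) I ∧
      2 ^ (2 * k) * k * m + 2 ^ k + m ≤ ∑ v ∈ I, isWeight k m v := by

  choose qa hqa using hf
  set rowS : ℕ → Finset ℕ :=
    fun j => insert j ((Finset.Icc (k+1) (2*k)).filter fun j' => f j j' = true) with hrow
  have hsub : ∀ j ∈ Finset.Icc 1 k, rowS j ⊆ Finset.Icc 1 (2*k) :=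
    fun j hj => (rowS_facts k f j hj).1
  have htr : ∀ j ∈ Finset.Icc 1 k, rowS j ∩ Finset.Icc 1 k = {j} :=
    fun j hj => (rowS_facts k f j hj).2.1
  have hmm : ∀ j ∈ Finset.Icc 1 k, ∀ j' ∈ Finset.Icc (k+1) (2*k),
      (j' ∈ rowS j ↔ f j j' = true) :=
    fun j hj => (rowS_facts k f j hj).2.2
  have hSS : ∀ j ∈ Finset.Icc 1 k, rowS j ∈ SS k := by
    intro j hj
    refine Finset.mem_filter.2 ⟨Finset.mem_powerset.2 (hsub j hj), ?_⟩
    rw [htr j hj, Finset.card_singleton]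
  -- the B side
  haveI : DecidablePred (fun t : Finset ℕ => ∀ j ∈ Finset.Icc 1 k, (rowS j ∩ t).card % 2 = 0) :=
    fun _ => Finset.decidableDforallFinset
  set Bgood : Finset (Finset ℕ) :=
    (PP k).filter (fun t => ∀ j ∈ Finset.Icc 1 k, (rowS j ∩ t).card % 2 = 0) with hBgood
  set bC : Finset ℕ → Finset ℕ :=
    fun t' => ((Finset.Icc 1 k).filter fun j => Odd ((rowS j ∩ t').card)) ∪ t' with hbC
  have hkey : ∀ t' ∈ (Finset.Icc (k+1) (2*k)).powerset,
      bC t' ∩ Finset.Icc (k+1) (2*k) = t' := by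
    intro t' ht'
    rw [Finset.mem_powerset] at ht'
    ext x
    simp only [hbC, Finset.mem_inter, Finset.mem_union, Finset.mem_filter, Finset.mem_Icc]
    constructor
    · rintro ⟨⟨⟨h1, h2⟩, -⟩ | hx, h3, h4⟩
      · omega
      · exact hx
    · intro hx
      have := Finset.mem_Icc.1 (ht' hx)
      exact ⟨Or.inr hx, by omega⟩
  have hbCmem : ∀ t' ∈ (Finset.Icc (k+1) (2*k)).powerset, bC t' ∈ Bgood := by
    intro t' ht'
    have ht'' := Finset.mem_powerset.1 ht'
    refine Finset.mem_filter.2 ⟨Finset.mem_powerset.2 ?_, ?_⟩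
    · intro x hx
      rcases Finset.mem_union.1 hx with hx | hx
      · have := Finset.mem_Icc.1 (Finset.mem_filter.1 hx).1
        rw [Finset.mem_Icc]; omega
      · have := Finset.mem_Icc.1 (ht'' hx)
        rw [Finset.mem_Icc]; omega
    · intro j hj
      have hsplit := split_card (htr j hj) (hsub j hj) (bC t')
      rw [hkey t' ht'] at hsplit
      have hjmem : j ∈ bC t' ↔ Odd ((rowS j ∩ t').card) := by
        simp only [hbC, Finset.mem_union, Finset.mem_filter]
        constructor
        · rintro (⟨-, h⟩ | h)
          · exact h
          · have h1 := Finset.mem_Icc.1 (ht'' h)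
            have h2 := Finset.mem_Icc.1 hj
            omega
        · intro h; exact Or.inl ⟨hj, h⟩
      by_cases hodd : Odd ((rowS j ∩ t').card)
      · rw [Finset.singleton_inter_of_mem (hjmem.2 hodd)] at hsplit
        rw [Finset.card_singleton] at hsplit
        rw [Nat.odd_iff] at hodd; omega
      · rw [Finset.singleton_inter_of_notMem (fun h => hodd (hjmem.1 h))] at hsplit
        rw [Finset.card_empty] at hsplit
        rw [Nat.odd_iff] at hodd; omega
  have hBcard : 2 ^ k ≤ Bgood.card := by
    have h1 : ((Finset.Icc (k+1) (2*k)).powerset).card ≤ Bgood.card := by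
      refine Finset.card_le_card_of_injOn bC hbCmem ?_
      intro t1 h1 t2 h2 heq
      have e1 := hkey t1 h1
      have e2 := hkey t2 h2
      rw [← e1, ← e2, heq]
    rw [Finset.card_powerset, Nat.card_Icc] at h1
    have : 2*k + 1 - (k+1) = k := by omega
    rwa [this] at h1
  -- the three parts
  set IA : Finset (ISVertex k m) :=
    (Finset.univ ×ˢ (Finset.Icc 1 k).attach).image
      (fun p : Fin m × {x // x ∈ Finset.Icc 1 k} =>
        (Sum.inl (p.1, ⟨rowS p.2.1, hSS p.2.1 p.2.2⟩) : ISVertex k m)) with hIA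
  set IB : Finset (ISVertex k m) :=
    Bgood.attach.image
      (fun t => (Sum.inr (Sum.inl ⟨t.1, (Finset.mem_filter.1 t.2).1⟩) : ISVertex k m)) with hIB
  set IC : Finset (ISVertex k m) :=
    Finset.univ.image (fun p : Fin m => (Sum.inr (Sum.inr (p, qa p)) : ISVertex k m)) with hIC
  refine ⟨IA ∪ IB ∪ IC, ?_, ?_⟩
  · -- independence
    have hformA : ∀ z ∈ IA, ∃ (i : Fin m) (j : ℕ) (hj : j ∈ Finset.Icc 1 k),
        z = Sum.inl (i, ⟨rowS j, hSS j hj⟩) := by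
      intro z hz
      obtain ⟨p, -, rfl⟩ := Finset.mem_image.1 hz
      exact ⟨p.1, p.2.1, p.2.2, rfl⟩
    have hformB : ∀ z ∈ IB, ∃ (t : Finset ℕ) (ht : t ∈ Bgood) (hP : t ∈ PP k),
        z = Sum.inr (Sum.inl ⟨t, hP⟩) := by
      intro z hz
      obtain ⟨t, -, rfl⟩ := Finset.mem_image.1 hz
      exact ⟨t.1, t.2, (Finset.mem_filter.1 t.2).1, rfl⟩
    have hformC : ∀ z ∈ IC, ∃ p : Fin m, z = Sum.inr (Sum.inr (p, qa p)) := by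
      intro z hz
      obtain ⟨p, -, rfl⟩ := Finset.mem_image.1 hz
      exact ⟨p, rfl⟩
    refine indep_of _ _ ?_
    intro x hx y hy hne hr
    have hx' : x ∈ IA ∨ x ∈ IB ∨ x ∈ IC := by
      rcases Finset.mem_union.1 hx with h | h
      · rcases Finset.mem_union.1 h with h | h
        · exact Or.inl h
        · exact Or.inr (Or.inl h)
      · exact Or.inr (Or.inr h)
    have hy' : y ∈ IA ∨ y ∈ IB ∨ y ∈ IC := by
      rcases Finset.mem_union.1 hy with h | h
      · rcases Finset.mem_union.1 h with h | h
        · exact Or.inl h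
        · exact Or.inr (Or.inl h)
      · exact Or.inr (Or.inr h)
    rcases hx' with hxa | hxb | hxc
    · obtain ⟨i, j, hj, rfl⟩ := hformA x hxa
      rcases hy' with hya | hyb | hyc
      · -- A-A
        obtain ⟨i', j', hj', rfl⟩ := hformA y hya
        obtain ⟨h1, h2⟩ := hr
        rw [htr j hj, htr j' hj'] at h2
        have : j = j' := Finset.singleton_injective h2
        subst this; subst h1
        exact hne rfl
      · -- A-B
        obtain ⟨t, ht, hP, rfl⟩ := hformB y hyb
        have heven := (Finset.mem_filter.1 ht).2 j hj
        have hr' : Odd ((rowS j ∩ t).card) := hr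
        rw [Nat.odd_iff] at hr'
        omega
      · obtain ⟨p, rfl⟩ := hformC y hyc
        exact hr
    · obtain ⟨t, ht, hP, rfl⟩ := hformB x hxb
      rcases hy' with hya | hyb | hyc
      · obtain ⟨i, j, hj, rfl⟩ := hformA y hya
        exact hr
      · obtain ⟨t', ht', hP', rfl⟩ := hformB y hyb
        exact hr
      · obtain ⟨p, rfl⟩ := hformC y hyc
        exact hr
    · obtain ⟨p, rfl⟩ := hformC x hxc
      rcases hy' with hya | hyb | hyc
      · -- C-A
        obtain ⟨i, j, hj, rfl⟩ := hformA y hya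
        obtain ⟨h1, hmem⟩ := hr
        obtain ⟨haL, hbH⟩ := hC p (qa p)
        obtain ⟨hm1, hm2⟩ := hmem
        have hj1 : j = (C p (qa p)).1.1 := by
          rw [htr j hj] at hm1
          exact Finset.singleton_injective hm1
        subst hj1
        have hsat := hqa p
        unfold litSat at hsat
        have hmemrow := hmm _ hj _ hbH
        cases hb2 : (C p (qa p)).2 with
        | true =>
          simp only [negLit, hb2, Bool.not_true, if_neg (by simp : ¬ (false = true))] at hm2
          rw [hb2] at hsat
          exact hm2 (hmemrow.2 hsat)
        | false =>
          simp only [negLit, hb2, Bool.not_false, if_pos rfl] at hm2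
          rw [hb2] at hsat
          rw [hmemrow.1 hm2] at hsat
          simp at hsat
      · obtain ⟨t, ht, hP, rfl⟩ := hformB y hyb
        exact hr
      · -- C-C
        obtain ⟨p', rfl⟩ := hformC y hyc
        have : p = p' := hr
        subst this
        exact hne rfl
  · -- weight bound
    have hd1 : Disjoint IA IB := by
      rw [Finset.disjoint_left]
      intro a ha hb
      obtain ⟨p, -, rfl⟩ := Finset.mem_image.1 ha
      obtain ⟨t, -, ht⟩ := Finset.mem_image.1 hb
      simp at ht
    have hd2 : Disjoint (IA ∪ IB) IC := by
      rw [Finset.disjoint_left]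
      intro a ha hc
      obtain ⟨p, -, rfl⟩ := Finset.mem_image.1 hc
      rcases Finset.mem_union.1 ha with h | h
      · obtain ⟨p', -, h'⟩ := Finset.mem_image.1 h
        simp at h'
      · obtain ⟨t, -, h'⟩ := Finset.mem_image.1 h
        simp at h'
    rw [Finset.sum_union hd2, Finset.sum_union hd1]
    have hsumA : ∑ v ∈ IA, isWeight k m v = IA.card * 2^(2*k) := by
      have h : ∀ v ∈ IA, isWeight k m v = 2^(2*k) := by
        intro v hv
        obtain ⟨p, -, rfl⟩ := Finset.mem_image.1 hv
        rfl
      rw [Finset.sum_congr rfl h, Finset.sum_const, smul_eq_mul]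
    have hsumB : ∑ v ∈ IB, isWeight k m v = IB.card := by
      have h : ∀ v ∈ IB, isWeight k m v = 1 := by
        intro v hv
        obtain ⟨t, -, rfl⟩ := Finset.mem_image.1 hv
        rfl
      rw [Finset.sum_congr rfl h, Finset.sum_const, smul_eq_mul, mul_one]
    have hsumC : ∑ v ∈ IC, isWeight k m v = IC.card := by
      have h : ∀ v ∈ IC, isWeight k m v = 1 := by
        intro v hv
        obtain ⟨p, -, rfl⟩ := Finset.mem_image.1 hv
        rfl
      rw [Finset.sum_congr rfl h, Finset.sum_const, smul_eq_mul, mul_one]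
    have hinjA : Function.Injective (fun p : Fin m × {x // x ∈ Finset.Icc 1 k} =>
        (Sum.inl (p.1, ⟨rowS p.2.1, hSS p.2.1 p.2.2⟩) : ISVertex k m)) := by
      intro p q heq
      simp only [Sum.inl.injEq, Prod.mk.injEq, Subtype.mk.injEq] at heq
      obtain ⟨h1, h2⟩ := heq
      have h3 : ({p.2.1} : Finset ℕ) = {q.2.1} := by
        rw [← htr _ p.2.2, ← htr _ q.2.2, h2]
      exact Prod.ext h1 (Subtype.ext (Finset.singleton_injective h3))
    have hIAcard : IA.card = m * k := by
      rw [hIA, Finset.card_image_of_injective _ hinjA, Finset.card_product,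
        Finset.card_attach, Finset.card_univ, Fintype.card_fin, Nat.card_Icc]
      simp
    have hinjB : Function.Injective (fun t : {x // x ∈ Bgood} =>
        (Sum.inr (Sum.inl ⟨t.1, (Finset.mem_filter.1 t.2).1⟩) : ISVertex k m)) := by
      intro t t' heq
      simp only [Sum.inr.injEq, Sum.inl.injEq, Subtype.mk.injEq] at heq
      exact Subtype.ext heq
    have hIBcard : IB.card = Bgood.card := by
      rw [hIB, Finset.card_image_of_injective _ hinjB, Finset.card_attach]
    have hinjC : Function.Injective (fun p : Fin m =>
        (Sum.inr (Sum.inr (p, qa p)) : ISVertex k m)) := by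
      intro p q heq
      simp only [Sum.inr.injEq, Prod.mk.injEq] at heq
      exact heq.1
    have hICcard : IC.card = m := by
      rw [hIC, Finset.card_image_of_injective _ hinjC, Finset.card_univ, Fintype.card_fin]
    rw [hsumA, hsumB, hsumC, hIAcard, hIBcard, hICcard]
    have he : m * k * 2^(2*k) = 2^(2*k) * k * m := by ring
    rw [he]
    exact Nat.add_le_add_right (Nat.add_le_add_left hBcard _) m

end IS9
namespace IS9

lemma backward (k m : ℕ) (hk : 1 ≤ k) (hm : 1 ≤ m)
    (C : Fin m → Fin 3 → Lit) (hC : ∀ p q, LitOK k (C p q))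
    (I : Finset (ISVertex k m)) (hI : IsIndepFinset (ISGraph k m C) I)
    (hw : 2 ^ (2 * k) * k * m + 2 ^ k + m ≤ ∑ v ∈ I, isWeight k m v) :
    ∃ f : ℕ → ℕ → Bool, ∀ p, ∃ q, litSat f (C p q) := by
  have hnr : ∀ x ∈ I, ∀ y ∈ I, x ≠ y → ¬ isRel k m C x y := by
    intro x hx y hy hne hr
    exact hI x hx y hy ((SimpleGraph.fromRel_adj _ x y).2 ⟨hne, Or.inl hr⟩)
  haveI : DecidablePred (fun p : Fin m × ↥(SS k) => Sum.inl p ∈ I) := fun _ => by infer_instance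
  haveI : DecidablePred (fun t : ↥(PP k) => Sum.inr (Sum.inl t) ∈ I) := fun _ => by infer_instance
  haveI : DecidablePred (fun p : Fin m × Fin 3 => Sum.inr (Sum.inr p) ∈ I) := fun _ => by infer_instance
  set AI : Finset (Fin m × ↥(SS k)) := Finset.univ.filter (fun p => Sum.inl p ∈ I) with hAIdef
  set BI : Finset ↥(PP k) :=
    Finset.univ.filter (fun t => Sum.inr (Sum.inl t) ∈ I) with hBIdef
  set CI : Finset (Fin m × Fin 3) :=
    Finset.univ.filter (fun p => Sum.inr (Sum.inr p) ∈ I) with hCIdef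
  have hAImem : ∀ p ∈ AI, Sum.inl p ∈ I := fun p hp => (Finset.mem_filter.1 hp).2
  have hBImem : ∀ t ∈ BI, Sum.inr (Sum.inl t) ∈ I := fun t ht => (Finset.mem_filter.1 ht).2
  have hCImem : ∀ p ∈ CI, Sum.inr (Sum.inr p) ∈ I := fun p hp => (Finset.mem_filter.1 hp).2
  -- decomposition of I
  have hIeq : I = AI.image (fun p => (Sum.inl p : ISVertex k m)) ∪ BI.image (fun t => (Sum.inr (Sum.inl t) : ISVertex k m))
      ∪ CI.image (fun p => (Sum.inr (Sum.inr p) : ISVertex k m)) := by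
    ext v
    constructor
    · intro hv
      rcases v with p | t | p
      · exact Finset.mem_union.2 (Or.inl (Finset.mem_union.2 (Or.inl
          (Finset.mem_image.2 ⟨p, Finset.mem_filter.2 ⟨Finset.mem_univ _, hv⟩, rfl⟩))))
      · exact Finset.mem_union.2 (Or.inl (Finset.mem_union.2 (Or.inr
          (Finset.mem_image.2 ⟨t, Finset.mem_filter.2 ⟨Finset.mem_univ _, hv⟩, rfl⟩))))
      · exact Finset.mem_union.2 (Or.inr
          (Finset.mem_image.2 ⟨p, Finset.mem_filter.2 ⟨Finset.mem_univ _, hv⟩, rfl⟩))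
    · intro hv
      rcases Finset.mem_union.1 hv with h | h
      · rcases Finset.mem_union.1 h with h | h
        · obtain ⟨p, hp, rfl⟩ := Finset.mem_image.1 h
          exact hAImem p hp
        · obtain ⟨t, ht, rfl⟩ := Finset.mem_image.1 h
          exact hBImem t ht
      · obtain ⟨p, hp, rfl⟩ := Finset.mem_image.1 h
        exact hCImem p hp
  have hd1 : Disjoint (AI.image (fun p => (Sum.inl p : ISVertex k m))) (BI.image (fun t => (Sum.inr (Sum.inl t) : ISVertex k m))) := by
    rw [Finset.disjoint_left]
    intro a ha hb
    obtain ⟨p, -, rfl⟩ := Finset.mem_image.1 ha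
    obtain ⟨t, -, ht⟩ := Finset.mem_image.1 hb
    simp at ht
  have hd2 : Disjoint (AI.image (fun p => (Sum.inl p : ISVertex k m)) ∪ BI.image (fun t => (Sum.inr (Sum.inl t) : ISVertex k m)))
      (CI.image (fun p => (Sum.inr (Sum.inr p) : ISVertex k m))) := by
    rw [Finset.disjoint_left]
    intro a ha hc
    obtain ⟨p, -, rfl⟩ := Finset.mem_image.1 hc
    rcases Finset.mem_union.1 ha with h | h
    · obtain ⟨p', -, h'⟩ := Finset.mem_image.1 h
      simp at h'
    · obtain ⟨t, -, h'⟩ := Finset.mem_image.1 h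
      simp at h'
  have hsum : ∑ v ∈ I, isWeight k m v = 2^(2*k) * AI.card + BI.card + CI.card := by
    rw [hIeq, Finset.sum_union hd2, Finset.sum_union hd1]
    rw [Finset.sum_image (fun x _ y _ h => Sum.inl_injective h)]
    rw [Finset.sum_image (fun x _ y _ h => Sum.inl_injective (Sum.inr_injective h))]
    rw [Finset.sum_image (fun x _ y _ h => Sum.inr_injective (Sum.inr_injective h))]
    simp only [isWeight]
    rw [Finset.sum_const, Finset.sum_const, Finset.sum_const, smul_eq_mul, smul_eq_mul,
      smul_eq_mul, mul_one, mul_one]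
    ring
  -- bounds for the three parts
  set g : Fin m × ↥(SS k) → Fin m × Finset ℕ :=
    fun p => (p.1, p.2.val ∩ Finset.Icc 1 k) with hgdef
  set T : Finset (Fin m × Finset ℕ) :=
    (Finset.univ : Finset (Fin m)) ×ˢ ((Finset.Icc 1 k).image fun j => ({j} : Finset ℕ))
    with hTdef
  have hgmaps : ∀ p ∈ AI, g p ∈ T := by
    intro p hp
    obtain ⟨hsub', hcard⟩ := Finset.mem_filter.1 p.2.2
    obtain ⟨j, hj⟩ := Finset.card_eq_one.1 hcard
    have hjL : j ∈ Finset.Icc 1 k := (mem_of_trace hj).1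
    exact Finset.mem_product.2 ⟨Finset.mem_univ _, Finset.mem_image.2 ⟨j, hjL, hj.symm⟩⟩
  have hginj : Set.InjOn g ↑AI := by
    intro p hp q hq heq
    by_contra hne
    have hne' : (Sum.inl p : ISVertex k m) ≠ Sum.inl q := fun h => hne (Sum.inl_injective h)
    refine hnr _ (hAImem p (Finset.mem_coe.1 hp)) _ (hAImem q (Finset.mem_coe.1 hq)) hne' ?_
    obtain ⟨i, s⟩ := p
    obtain ⟨i', s'⟩ := q
    simp only [hgdef, Prod.mk.injEq] at heq
    exact ⟨heq.1, heq.2⟩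
  have hTcard : T.card = m * k := by
    rw [hTdef, Finset.card_product, Finset.card_univ, Fintype.card_fin,
      Finset.card_image_of_injective _ Finset.singleton_injective, Nat.card_Icc]
    simp
  have hAcard_le : AI.card ≤ m * k :=
    hTcard ▸ Finset.card_le_card_of_injOn g hgmaps hginj
  have hCinj : Set.InjOn (Prod.fst : Fin m × Fin 3 → Fin m) ↑CI := by
    intro p hp q hq heq
    by_contra hne
    have hne' : (Sum.inr (Sum.inr p) : ISVertex k m) ≠ Sum.inr (Sum.inr q) :=
      fun h => hne (Sum.inr_injective (Sum.inr_injective h))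
    refine hnr _ (hCImem p (Finset.mem_coe.1 hp)) _ (hCImem q (Finset.mem_coe.1 hq)) hne' ?_
    obtain ⟨i, a⟩ := p
    obtain ⟨i', a'⟩ := q
    exact heq
  have hCcard_le : CI.card ≤ m := by
    have h := Finset.card_le_card_of_injOn Prod.fst
      (fun p _ => Finset.mem_univ p.1) hCinj
    rwa [Finset.card_univ, Fintype.card_fin] at h
  have hBcard_le' : BI.card ≤ 2^(2*k) := by
    have h1 : BI.card ≤ (Finset.univ : Finset ↥(PP k)).card := by
      rw [hBIdef]; exact Finset.card_filter_le _ _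
    rwa [Finset.card_univ, Fintype.card_coe, Finset.card_powerset, Nat.card_Icc,
      Nat.add_sub_cancel] at h1
  have hw' := hw
  rw [hsum] at hw'
  -- AI.card = m * k
  have hAcard : AI.card = m * k := by
    by_contra hne
    have h1 : AI.card + 1 ≤ m * k := by omega
    have h2 : 2^(2*k) * (AI.card + 1) ≤ 2^(2*k) * (m*k) := Nat.mul_le_mul_left _ h1
    have h4 : 2^(2*k) * AI.card + BI.card + CI.card ≤ 2^(2*k) * AI.card + 2^(2*k) + m :=
      Nat.add_le_add (Nat.add_le_add_left hBcard_le' _) hCcard_le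
    have h7 : 2^(2*k)*k*m + 2^k + m ≤ 2^(2*k)*k*m + m := by
      calc 2^(2*k)*k*m + 2^k + m ≤ 2^(2*k) * AI.card + 2^(2*k) + m := le_trans hw' h4
        _ = 2^(2*k) * (AI.card+1) + m := by ring
        _ ≤ 2^(2*k) * (m*k) + m := Nat.add_le_add_right h2 m
        _ = 2^(2*k)*k*m + m := by ring_nf
    have h8 : 2^(2*k)*k*m + 2^k ≤ 2^(2*k)*k*m := Nat.add_le_add_iff_right.mp h7
    have h8' : 2^(2*k)*k*m + 2^k ≤ 2^(2*k)*k*m + 0 := by rwa [Nat.add_zero]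
    have h9 : 2^k ≤ 0 := Nat.le_of_add_le_add_left h8'
    exact absurd h9 (Nat.not_le.2 (Nat.two_pow_pos k))
  have hbc : 2^k + m ≤ BI.card + CI.card := by
    rw [hAcard] at hw'
    have he : 2^(2*k) * (m*k) = 2^(2*k)*k*m := by ring
    rw [he] at hw'
    rw [Nat.add_assoc, Nat.add_assoc] at hw'
    exact Nat.le_of_add_le_add_left hw'
  have hb_ge : 2^k ≤ BI.card := by
    have h := le_trans hbc (Nat.add_le_add_left hCcard_le _)
    exact Nat.le_of_add_le_add_right h
  -- surjectivity of the A side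
  have himg : AI.image g = T := by
    apply Finset.eq_of_subset_of_card_le
    · intro x hx
      obtain ⟨p, hp, rfl⟩ := Finset.mem_image.1 hx
      exact hgmaps p hp
    · rw [Finset.card_image_of_injOn hginj, hAcard, hTcard]
  have hsurjA : ∀ (i : Fin m) (j : ℕ), j ∈ Finset.Icc 1 k →
      ∃ s : ↥(SS k), (i, s) ∈ AI ∧ s.val ∩ Finset.Icc 1 k = {j} := by
    intro i j hj
    have hmemT : ((i, ({j} : Finset ℕ)) : Fin m × Finset ℕ) ∈ T :=
      Finset.mem_product.2 ⟨Finset.mem_univ _, Finset.mem_image.2 ⟨j, hj, rfl⟩⟩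
    rw [← himg] at hmemT
    obtain ⟨p, hp, hpe⟩ := Finset.mem_image.1 hmemT
    obtain ⟨i', s⟩ := p
    simp only [hgdef, Prod.mk.injEq] at hpe
    obtain ⟨rfl, h2⟩ := hpe
    exact ⟨s, hp, h2⟩
  choose sfun hsfun1 hsfun2 using hsurjA
  have hsfunI : ∀ (i : Fin m) (j : ℕ) (hj : j ∈ Finset.Icc 1 k),
      Sum.inl (i, sfun i j hj) ∈ I := fun i j hj => hAImem _ (hsfun1 i j hj)
  have hsfunsub : ∀ (i : Fin m) (j : ℕ) (hj : j ∈ Finset.Icc 1 k),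
      (sfun i j hj).val ⊆ Finset.Icc 1 (2*k) :=
    fun i j hj => Finset.mem_powerset.1 (Finset.mem_filter.1 (sfun i j hj).2).1
  set i0 : Fin m := ⟨0, hm⟩ with hi0
  -- B side evenness
  have hBeven : ∀ t ∈ BI, ∀ (i : Fin m) (j : ℕ) (hj : j ∈ Finset.Icc 1 k),
      Even (((sfun i j hj).val ∩ (t : ↥(PP k)).val).card) := by
    intro t ht i j hj
    have hne : (Sum.inl (i, sfun i j hj) : ISVertex k m) ≠ Sum.inr (Sum.inl t) := by simp
    have h := hnr _ (hsfunI i j hj) _ (hBImem t ht) hne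
    have hodd : ¬ Odd (((sfun i j hj).val ∩ t.val).card) := h
    exact Nat.not_odd_iff_even.1 hodd
  set ψ : ↥(PP k) → Finset ℕ := fun t => t.val ∩ Finset.Icc (k+1) (2*k) with hψdef
  have hmem_iff : ∀ t ∈ BI, ∀ (j : ℕ) (hj : j ∈ Finset.Icc 1 k),
      (j ∈ (t : ↥(PP k)).val ↔
        Odd (((sfun i0 j hj).val ∩ (t.val ∩ Finset.Icc (k+1) (2*k))).card)) :=
    fun t ht j hj => mem_iff_odd (hsfun2 i0 j hj) (hsfunsub i0 j hj) (hBeven t ht i0 j hj)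
  have hψmaps : ∀ t ∈ BI, ψ t ∈ (Finset.Icc (k+1) (2*k)).powerset :=
    fun t _ => Finset.mem_powerset.2 Finset.inter_subset_right
  have hψinj : Set.InjOn ψ ↑BI := by
    intro t ht t' ht' heq
    simp only [hψdef] at heq
    apply Subtype.ext
    ext x
    by_cases hxL : x ∈ Finset.Icc 1 k
    · rw [hmem_iff t (Finset.mem_coe.1 ht) x hxL, hmem_iff t' (Finset.mem_coe.1 ht') x hxL, heq]
    · constructor
      · intro hx
        have hx2 : x ∈ Finset.Icc 1 (2*k) := Finset.mem_powerset.1 t.2 hx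
        have hxH : x ∈ Finset.Icc (k+1) (2*k) := by
          rw [Finset.mem_Icc] at hx2 ⊢
          rw [Finset.mem_Icc] at hxL
          omega
        have hxi : x ∈ t.val ∩ Finset.Icc (k+1) (2*k) := Finset.mem_inter.2 ⟨hx, hxH⟩
        rw [heq] at hxi
        exact (Finset.mem_inter.1 hxi).1
      · intro hx
        have hx2 : x ∈ Finset.Icc 1 (2*k) := Finset.mem_powerset.1 t'.2 hx
        have hxH : x ∈ Finset.Icc (k+1) (2*k) := by
          rw [Finset.mem_Icc] at hx2 ⊢
          rw [Finset.mem_Icc] at hxL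
          omega
        have hxi : x ∈ t'.val ∩ Finset.Icc (k+1) (2*k) := Finset.mem_inter.2 ⟨hx, hxH⟩
        rw [← heq] at hxi
        exact (Finset.mem_inter.1 hxi).1
  have hb_le : BI.card ≤ 2^k := by
    have h1 := Finset.card_le_card_of_injOn ψ hψmaps hψinj
    rw [Finset.card_powerset, Nat.card_Icc] at h1
    have h2 : 2*k+1-(k+1) = k := by omega
    rwa [h2] at h1
  have hBim : BI.image ψ = (Finset.Icc (k+1) (2*k)).powerset := by
    apply Finset.eq_of_subset_of_card_le
    · intro x hx
      obtain ⟨t, ht, rfl⟩ := Finset.mem_image.1 hx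
      exact hψmaps t ht
    · rw [Finset.card_image_of_injOn hψinj, Finset.card_powerset, Nat.card_Icc]
      have h2 : 2*k+1-(k+1) = k := by omega
      rw [h2]
      exact hb_ge
  have hBsurj : ∀ u ⊆ Finset.Icc (k+1) (2*k), ∃ t : ↥(PP k), t ∈ BI ∧
      t.val ∩ Finset.Icc (k+1) (2*k) = u := by
    intro u hu
    have hmem : u ∈ BI.image ψ := hBim ▸ Finset.mem_powerset.2 hu
    obtain ⟨t, ht, hte⟩ := Finset.mem_image.1 hmem
    exact ⟨t, ht, by simpa [hψdef] using hte⟩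
  -- consistency of the chosen row sets
  have hcons : ∀ (i : Fin m) (j : ℕ) (hj : j ∈ Finset.Icc 1 k),
      (sfun i j hj).val = (sfun i0 j hj).val := by
    intro i j hj
    by_contra hne
    have hx : ∃ x, (x ∈ (sfun i j hj).val ∧ x ∉ (sfun i0 j hj).val) ∨
        (x ∈ (sfun i0 j hj).val ∧ x ∉ (sfun i j hj).val) := by
      by_contra hno
      push_neg at hno
      apply hne
      ext x
      have h := hno x
      tauto
    obtain ⟨x, hxcase⟩ := hx
    have hxH : x ∈ Finset.Icc (k+1) (2*k) := by
      rcases hxcase with ⟨hx1, hx2⟩ | ⟨hx1, hx2⟩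
      · have hb := Finset.mem_Icc.1 (hsfunsub i j hj hx1)
        by_cases hxk : x ≤ k
        · have hxt : x ∈ (sfun i j hj).val ∩ Finset.Icc 1 k :=
            Finset.mem_inter.2 ⟨hx1, Finset.mem_Icc.2 ⟨hb.1, hxk⟩⟩
          rw [hsfun2 i j hj] at hxt
          have hxj : x = j := Finset.mem_singleton.1 hxt
          subst hxj
          exact absurd (mem_of_trace (hsfun2 i0 x hj)).2 hx2
        · rw [Finset.mem_Icc]; omega
      · have hb := Finset.mem_Icc.1 (hsfunsub i0 j hj hx1)
        by_cases hxk : x ≤ k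
        · have hxt : x ∈ (sfun i0 j hj).val ∩ Finset.Icc 1 k :=
            Finset.mem_inter.2 ⟨hx1, Finset.mem_Icc.2 ⟨hb.1, hxk⟩⟩
          rw [hsfun2 i0 j hj] at hxt
          have hxj : x = j := Finset.mem_singleton.1 hxt
          subst hxj
          exact absurd (mem_of_trace (hsfun2 i x hj)).2 hx2
        · rw [Finset.mem_Icc]; omega
    obtain ⟨t, htBI, htH⟩ := hBsurj {x} (Finset.singleton_subset_iff.2 hxH)
    have he1 := hBeven t htBI i j hj
    have he2 := hBeven t htBI i0 j hj
    have hs1 := split_card (hsfun2 i j hj) (hsfunsub i j hj) t.val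
    have hs2 := split_card (hsfun2 i0 j hj) (hsfunsub i0 j hj) t.val
    rw [htH] at hs1 hs2
    rcases hxcase with ⟨hx1, hx2⟩ | ⟨hx1, hx2⟩
    · rw [Finset.inter_singleton_of_mem hx1, Finset.card_singleton] at hs1
      rw [Finset.inter_singleton_of_notMem hx2, Finset.card_empty] at hs2
      rw [hs1, Nat.even_iff] at he1
      rw [hs2, Nat.even_iff] at he2
      omega
    · rw [Finset.inter_singleton_of_notMem hx2, Finset.card_empty] at hs1
      rw [Finset.inter_singleton_of_mem hx1, Finset.card_singleton] at hs2
      rw [hs1, Nat.even_iff] at he1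
      rw [hs2, Nat.even_iff] at he2
      omega
  -- every clause contributes a c-vertex
  have hc_ge : m ≤ CI.card := by
    have h := le_trans hbc (Nat.add_le_add_right hb_le CI.card)
    exact Nat.le_of_add_le_add_left h
  have hCcard : CI.card = m := le_antisymm hCcard_le hc_ge
  have hCim : CI.image Prod.fst = Finset.univ := by
    apply Finset.eq_of_subset_of_card_le
    · intro x _
      exact Finset.mem_univ x
    · rw [Finset.card_image_of_injOn hCinj, hCcard, Finset.card_univ, Fintype.card_fin]
  have hCsurj : ∀ p : Fin m, ∃ q : Fin 3, (p, q) ∈ CI := by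
    intro p
    have hmem : p ∈ CI.image Prod.fst := hCim ▸ Finset.mem_univ p
    obtain ⟨pq, hpq, hpe⟩ := Finset.mem_image.1 hmem
    obtain ⟨p1, q⟩ := pq
    cases hpe
    exact ⟨q, hpq⟩
  -- the assignment
  set F : ℕ → Finset ℕ :=
    fun j => if hj : j ∈ Finset.Icc 1 k then (sfun i0 j hj).val else ∅ with hFdef
  have hF : ∀ (j : ℕ) (hj : j ∈ Finset.Icc 1 k), F j = (sfun i0 j hj).val := by
    intro j hj
    simp only [hFdef]
    exact dif_pos hj
  refine ⟨fun j j' => decide (j' ∈ F j), fun p => ?_⟩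
  obtain ⟨q, hq⟩ := hCsurj p
  refine ⟨q, ?_⟩
  obtain ⟨haL, hbH⟩ := hC p q
  have hcv : Sum.inr (Sum.inr (p, q)) ∈ I := hCImem _ hq
  have hav : Sum.inl (p, sfun p (C p q).1.1 haL) ∈ I := hsfunI p _ haL
  have hne : (Sum.inr (Sum.inr (p, q)) : ISVertex k m) ≠
      Sum.inl (p, sfun p (C p q).1.1 haL) := by simp
  have hnrel := hnr _ hcv _ hav hne
  have hnmem : ¬ memSLit k (negLit (C p q)) (sfun p (C p q).1.1 haL).val :=
    fun hmm' => hnrel ⟨rfl, hmm'⟩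
  rw [hcons p _ haL] at hnmem
  have htrace : (sfun i0 (C p q).1.1 haL).val ∩ Finset.Icc 1 k = {(C p q).1.1} :=
    hsfun2 i0 (C p q).1.1 haL
  have hB : ¬ (if ((!(C p q).2) = true) then
        ((C p q).1.2 ∈ (sfun i0 (C p q).1.1 haL).val)
      else ((C p q).1.2 ∉ (sfun i0 (C p q).1.1 haL).val)) :=
    fun hb => hnmem ⟨htrace, hb⟩
  unfold litSat
  show decide ((C p q).1.2 ∈ F (C p q).1.1) = (C p q).2
  rw [hF _ haL]
  cases hs2 : (C p q).2 with
  | true =>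
    rw [hs2] at hB
    rw [if_neg (by simp)] at hB
    have hin : (C p q).1.2 ∈ (sfun i0 (C p q).1.1 haL).val := not_not.1 hB
    simp [hin]
  | false =>
    rw [hs2] at hB
    rw [if_pos (by simp)] at hB
    simp [hB]

end IS9
/-- the 3-CNF formula `φ` (with clauses `C p = (C p 0, C p 1, C p 2)`,
`p ∈ [m]`, over the variables `v_{i,j}`, `i ∈ [k]`, `j ∈ [k+1,2k]`) is satisfiable iff
the weighted graph `G(φ)` of the independent-set reduction has an independent set of
total weight at least `2^{2k}·k·m + 2^k + m`. -/
theorem satisfiable_iff_indepSet_weight (k m : ℕ) (hk : 1 ≤ k) (hm : 1 ≤ m)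
    (C : Fin m → Fin 3 → Lit) (hC : ∀ p q, LitOK k (C p q)) :
    (∃ f : ℕ → ℕ → Bool, ∀ p, ∃ q, litSat f (C p q)) ↔
      ∃ I : Finset (ISVertex k m), IsIndepFinset (ISGraph k m C) I ∧
        2 ^ (2 * k) * k * m + 2 ^ k + m ≤ ∑ v ∈ I, isWeight k m v := by

  constructor
  · rintro ⟨f, hf⟩
    exact IS9.forward k m hk hm C hC f hf
  · rintro ⟨I, hI, hw⟩
    exact IS9.backward k m hk hm C hC I hI hw
end

section
/- Let k ≥ 1, m ≥ 1, let φ be a 3-CNF formula with clauses C_1,…,C_m over the variables {v_{i,j} : i ∈ [k], j ∈ [k+1,2k]}, and let G = G(φ) be the graph of the independent-set reduction. Then there exists an enumeration of V(G) of width at most 2k + 4; in particular, the linear rank-width of G is at most 2k + 4. -/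
open scoped Classical in
/-- The cut-rank of the cut `(X, V ∖ X)` in a finite simple graph `G`: the `𝔽₂`-rank of
the 0-1 matrix with rows indexed by `X`, columns by its complement, and entry `(x,y)`
equal to `1` iff `xy ∈ E(G)`. -/
noncomputable def cutRank {V : Type*} [Fintype V] [DecidableEq V]
    (G : SimpleGraph V) (X : Finset V) : ℕ :=
  (Matrix.of fun (x : ↥X) (y : ↥(Xᶜ)) =>
    if G.Adj x.val y.val then (1 : ZMod 2) else 0).rank

/-- The prefix `{v_1, …, v_p}` of the enumeration `e` of the vertices. -/
def enumPrefix {V : Type*} [Fintype V] [DecidableEq V]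
    (e : Fin (Fintype.card V) ≃ V) (p : ℕ) : Finset V :=
  (Finset.univ.filter fun i : Fin (Fintype.card V) => (i : ℕ) < p).image e

-- ===== auxiliary development =====

/-- group index of `s`: the unique element of `s ∩ [k]`. -/
def jfun (k : ℕ) (s : Finset ℕ) : ℕ := (s ∩ Finset.Icc 1 k).sum id

lemma SS_inter {k : ℕ} {s : Finset ℕ} (hs : s ∈ SS k) :
    s ∩ Finset.Icc 1 k = {jfun k s} := by
  obtain ⟨j, hj⟩ := Finset.card_eq_one.mp ((Finset.mem_filter.mp hs).2)
  rw [jfun, hj]; simp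

lemma jfun_mem {k : ℕ} {s : Finset ℕ} (hs : s ∈ SS k) : jfun k s ∈ Finset.Icc 1 k := by
  have h : jfun k s ∈ s ∩ Finset.Icc 1 k := by rw [SS_inter hs]; simp
  exact (Finset.mem_inter.mp h).2

lemma SS_subset {k : ℕ} {s : Finset ℕ} (hs : s ∈ SS k) : s ⊆ Finset.Icc 1 (2*k) :=
  Finset.mem_powerset.mp (Finset.mem_filter.mp hs).1

/-- the sorting key. -/
def keyV (k m : ℕ) : ISVertex k m → ℕ
  | Sum.inr (Sum.inl _) => 0
  | Sum.inr (Sum.inr (i, _)) => 1 + i * (k + 1)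
  | Sum.inl (i, s) => 1 + i * (k + 1) + jfun k s.val

/-- the clause-block of a vertex. -/
def blockIdx (k m : ℕ) : ISVertex k m → Option (Fin m)
  | Sum.inr (Sum.inl _) => none
  | Sum.inr (Sum.inr (i, _)) => some i
  | Sum.inl (i, _) => some i

lemma keyV_block_bounds {k m : ℕ} (v : ISVertex k m) {i : Fin m}
    (h : blockIdx k m v = some i) :
    1 + i * (k+1) ≤ keyV k m v ∧ keyV k m v ≤ 1 + i * (k+1) + k := by
  rcases v with ⟨i2, s⟩ | t | ⟨i2, q⟩
  · simp only [blockIdx, Option.some.injEq] at h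
    subst h
    have h2 := jfun_mem s.property
    rw [Finset.mem_Icc] at h2
    simp only [keyV]
    omega
  · simp [blockIdx] at h
  · simp only [blockIdx, Option.some.injEq] at h
    subst h
    simp only [keyV]
    omega

lemma keyV_lt_of_block_lt {k m : ℕ} {v w : ISVertex k m} {i i' : Fin m}
    (hv : blockIdx k m v = some i) (hw : blockIdx k m w = some i')
    (hii : i < i') : keyV k m v < keyV k m w := by
  have h1 := (keyV_block_bounds v hv).2
  have h2 := (keyV_block_bounds w hw).1
  have h3 : ((i:ℕ)+1) * (k+1) ≤ (i':ℕ) * (k+1) :=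
    Nat.mul_le_mul_right _ hii
  have : (i:ℕ) * (k+1) + (k+1) ≤ (i':ℕ) * (k+1) := by
    rw [← Nat.succ_mul]; exact h3
  omega

lemma keyV_b_lt {k m : ℕ} (t : ↥(PP k)) (v : ISVertex k m) {i : Fin m}
    (h : blockIdx k m v = some i) :
    keyV k m (Sum.inr (Sum.inl t)) < keyV k m v := by
  have := (keyV_block_bounds v h).1
  show 0 < keyV k m v
  omega

lemma keyV_c_lt_a {k m : ℕ} (i : Fin m) (q : Fin 3) (s : ↥(SS k)) :
    keyV k m (Sum.inr (Sum.inr (i, q))) < keyV k m (Sum.inl (i, s)) := by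
  have h2 := jfun_mem s.property
  rw [Finset.mem_Icc] at h2
  simp only [keyV]; omega

section Star

variable (k m : ℕ)

/-- some clause block has a vertex inside `X` and a vertex outside `X`. -/
def PCond (X : Finset (ISVertex k m)) : Prop :=
  ∃ i : Fin m, (∃ v ∈ X, blockIdx k m v = some i) ∧
    (∃ v, v ∉ X ∧ blockIdx k m v = some i)

open scoped Classical in
/-- the active clause. -/
noncomputable def iStar (hm : 1 ≤ m) (X : Finset (ISVertex k m)) : Fin m :=
  if h : PCond k m X then h.choose else ⟨0, hm⟩

variable {k m}
variable {hm : 1 ≤ m} {X : Finset (ISVertex k m)}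

/-- `X` is downward closed for the key. -/
def DC (X : Finset (ISVertex k m)) : Prop :=
  ∀ v w : ISVertex k m, keyV k m v < keyV k m w → w ∈ X → v ∈ X

lemma iStar_spec (h : PCond k m X) :
    (∃ v ∈ X, blockIdx k m v = some (iStar k m hm X)) ∧
    (∃ v, v ∉ X ∧ blockIdx k m v = some (iStar k m hm X)) := by
  rw [iStar, dif_pos h]
  exact h.choose_spec

lemma iStar_unique (hX : DC X) {i : Fin m}
    (h1 : ∃ v ∈ X, blockIdx k m v = some i)
    (h2 : ∃ v, v ∉ X ∧ blockIdx k m v = some i) : i = iStar k m hm X := by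
  have hP : PCond k m X := ⟨i, h1, h2⟩
  obtain ⟨⟨w0, hw0X, hw0b⟩, ⟨v0, hv0X, hv0b⟩⟩ := iStar_spec hP
  rcases lt_trichotomy i (iStar k m hm X) with h | h | h
  · obtain ⟨v, hvX, hvb⟩ := h2
    exact absurd (hX v w0 (keyV_lt_of_block_lt hvb hw0b h) hw0X) hvX
  · exact h
  · obtain ⟨w, hwX, hwb⟩ := h1
    exact absurd (hX v0 w (keyV_lt_of_block_lt hv0b hwb h) hwX) hv0X

variable (k m)

/-- the active group inside the active clause. -/
def QCond (hm : 1 ≤ m) (X : Finset (ISVertex k m)) : Prop :=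
  ∃ s : ↥(SS k), (Sum.inl (iStar k m hm X, s) : ISVertex k m) ∉ X ∧
    ∃ s' : ↥(SS k), (Sum.inl (iStar k m hm X, s') : ISVertex k m) ∈ X ∧
      jfun k s'.val = jfun k s.val

open scoped Classical in
noncomputable def jStar (hm : 1 ≤ m) (X : Finset (ISVertex k m)) : ℕ :=
  if h : QCond k m hm X then jfun k h.choose.val else 0

variable {k m}

lemma jStar_unique (hX : DC X) {s s' : ↥(SS k)}
    (h1 : (Sum.inl (iStar k m hm X, s) : ISVertex k m) ∉ X)
    (h2 : (Sum.inl (iStar k m hm X, s') : ISVertex k m) ∈ X)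
    (h3 : jfun k s'.val = jfun k s.val) :
    jfun k s.val = jStar k m hm X := by
  have hQ : QCond k m hm X := ⟨s, h1, s', h2, h3⟩
  rw [jStar, dif_pos hQ]
  obtain ⟨h01, s0', h02, h03⟩ := hQ.choose_spec
  set s0 : ↥(SS k) := hQ.choose
  rcases lt_trichotomy (jfun k s.val) (jfun k s0.val) with h | h | h
  · -- s ∉ X but s0' ∈ X with jfun s0' = jfun s0 > jfun s : contradiction
    refine absurd (hX (Sum.inl (iStar k m hm X, s)) (Sum.inl (iStar k m hm X, s0')) ?_ h02) h1
    simp only [keyV]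
    omega
  · exact h
  · refine absurd (hX (Sum.inl (iStar k m hm X, s0)) (Sum.inl (iStar k m hm X, s')) ?_ h2) h01
    simp only [keyV]
    omega

/-- index type for the generating vectors. -/
abbrev GenIdx (k : ℕ) : Type := {j // j ∈ Finset.Icc 1 (2*k)} ⊕ Fin 3 ⊕ Fin 1

lemma card_GenIdx (k : ℕ) : Fintype.card (GenIdx k) = 2*k + 4 := by
  simp [GenIdx]

open scoped Classical in
/-- the generating vectors for the column space of a prefix cut. -/
noncomputable def gen (k m : ℕ) (hm : 1 ≤ m) (X : Finset (ISVertex k m)) :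
    GenIdx k → (↥X → ZMod 2)
  | Sum.inl j => fun x => match x.val with
      | Sum.inr (Sum.inl t) => if j.val ∈ t.val then 1 else 0
      | _ => 0
  | Sum.inr (Sum.inl q) => fun x =>
      if x.val = Sum.inr (Sum.inr (iStar k m hm X, q)) then 1 else 0
  | Sum.inr (Sum.inr _) => fun x => match x.val with
      | Sum.inl (i, s') =>
          if i = iStar k m hm X ∧ jfun k s'.val = jStar k m hm X then 1 else 0
      | _ => 0

open scoped Classical in
/-- the coefficients expressing the column of `y` in terms of the generators. -/
noncomputable def coef (k m : ℕ) (hm : 1 ≤ m) (C : Fin m → Fin 3 → Lit)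
    (X : Finset (ISVertex k m)) (y : ISVertex k m) : GenIdx k → ZMod 2
  | Sum.inl j => match y with
      | Sum.inl (_, s) => if j.val ∈ s.val then 1 else 0
      | _ => 0
  | Sum.inr (Sum.inl q) => match y with
      | Sum.inl (i', s) =>
          if i' = iStar k m hm X ∧ memSLit k (negLit (C (iStar k m hm X) q)) s.val
          then 1 else 0
      | Sum.inr (Sum.inr (i', q')) =>
          if i' = iStar k m hm X ∧ q ≠ q' then 1 else 0
      | _ => 0
  | Sum.inr (Sum.inr _) => match y with
      | Sum.inl (i', s) =>
          if i' = iStar k m hm X ∧ jfun k s.val = jStar k m hm X then 1 else 0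
      | _ => 0

/-- rank bound via a spanning family of columns. -/
lemma rank_le_span {p q ι : Type*} [Fintype p] [Fintype q] [Fintype ι]
    (M : Matrix p q (ZMod 2)) (g : ι → p → ZMod 2)
    (h : ∀ j, M.transpose j ∈ Submodule.span (ZMod 2) (Set.range g)) :
    M.rank ≤ Fintype.card ι := by
  rw [Matrix.rank, Matrix.range_mulVecLin]
  refine le_trans (Submodule.finrank_mono ?_) (finrank_range_le_card g)
  rw [Submodule.span_le]
  rintro v ⟨j, rfl⟩
  exact h j

section Apply
open scoped Classical

variable {k m : ℕ} (hm : 1 ≤ m) (X : Finset (ISVertex k m)) (C : Fin m → Fin 3 → Lit)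

lemma gen_u_a (j) (i : Fin m) (s : ↥(SS k)) (h : Sum.inl (i,s) ∈ X) :
    gen k m hm X (Sum.inl j) ⟨Sum.inl (i,s), h⟩ = 0 := rfl
lemma gen_u_b (j) (t : ↥(PP k)) (h : Sum.inr (Sum.inl t) ∈ X) :
    gen k m hm X (Sum.inl j) ⟨Sum.inr (Sum.inl t), h⟩ =
      if j.val ∈ t.val then 1 else 0 := rfl
lemma gen_u_c (j) (i : Fin m) (q : Fin 3) (h : Sum.inr (Sum.inr (i,q)) ∈ X) :
    gen k m hm X (Sum.inl j) ⟨Sum.inr (Sum.inr (i,q)), h⟩ = 0 := rfl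
lemma gen_d_apply (q : Fin 3) (x : ↥X) :
    gen k m hm X (Sum.inr (Sum.inl q)) x =
      if x.val = Sum.inr (Sum.inr (iStar k m hm X, q)) then 1 else 0 := rfl
lemma gen_v_a (z : Fin 1) (i : Fin m) (s : ↥(SS k)) (h : Sum.inl (i,s) ∈ X) :
    gen k m hm X (Sum.inr (Sum.inr z)) ⟨Sum.inl (i,s), h⟩ =
      if i = iStar k m hm X ∧ jfun k s.val = jStar k m hm X then 1 else 0 := rfl
lemma gen_v_b (z : Fin 1) (t : ↥(PP k)) (h : Sum.inr (Sum.inl t) ∈ X) :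
    gen k m hm X (Sum.inr (Sum.inr z)) ⟨Sum.inr (Sum.inl t), h⟩ = 0 := rfl
lemma gen_v_c (z : Fin 1) (i : Fin m) (q : Fin 3) (h : Sum.inr (Sum.inr (i,q)) ∈ X) :
    gen k m hm X (Sum.inr (Sum.inr z)) ⟨Sum.inr (Sum.inr (i,q)), h⟩ = 0 := rfl

lemma coef_u_a (j) (i : Fin m) (s : ↥(SS k)) :
    coef k m hm C X (Sum.inl (i,s)) (Sum.inl j) = if j.val ∈ s.val then 1 else 0 := rfl
lemma coef_u_b (j) (t : ↥(PP k)) :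
    coef k m hm C X (Sum.inr (Sum.inl t)) (Sum.inl j) = 0 := rfl
lemma coef_u_c (j) (i : Fin m) (q : Fin 3) :
    coef k m hm C X (Sum.inr (Sum.inr (i,q))) (Sum.inl j) = 0 := rfl
lemma coef_d_a (q : Fin 3) (i : Fin m) (s : ↥(SS k)) :
    coef k m hm C X (Sum.inl (i,s)) (Sum.inr (Sum.inl q)) =
      if i = iStar k m hm X ∧ memSLit k (negLit (C (iStar k m hm X) q)) s.val
      then 1 else 0 := rfl
lemma coef_d_b (q : Fin 3) (t : ↥(PP k)) :
    coef k m hm C X (Sum.inr (Sum.inl t)) (Sum.inr (Sum.inl q)) = 0 := rfl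
lemma coef_d_c (q : Fin 3) (i : Fin m) (q' : Fin 3) :
    coef k m hm C X (Sum.inr (Sum.inr (i,q'))) (Sum.inr (Sum.inl q)) =
      if i = iStar k m hm X ∧ q ≠ q' then 1 else 0 := rfl
lemma coef_v_a (z : Fin 1) (i : Fin m) (s : ↥(SS k)) :
    coef k m hm C X (Sum.inl (i,s)) (Sum.inr (Sum.inr z)) =
      if i = iStar k m hm X ∧ jfun k s.val = jStar k m hm X then 1 else 0 := rfl
lemma coef_v_b (z : Fin 1) (t : ↥(PP k)) :
    coef k m hm C X (Sum.inr (Sum.inl t)) (Sum.inr (Sum.inr z)) = 0 := rfl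
lemma coef_v_c (z : Fin 1) (i : Fin m) (q : Fin 3) :
    coef k m hm C X (Sum.inr (Sum.inr (i,q))) (Sum.inr (Sum.inr z)) = 0 := rfl

end Apply

lemma cast_parity (n : ℕ) : ((n : ZMod 2)) = if Odd n then 1 else 0 := by
  rcases Nat.even_or_odd n with h | h
  · rw [if_neg (Nat.not_odd_iff_even.mpr h)]
    obtain ⟨r, rfl⟩ := h
    push_cast
    rw [← two_mul]
    rw [show ((2:ZMod 2)) = 0 from rfl, zero_mul]
  · rw [if_pos h]
    obtain ⟨r, rfl⟩ := h
    push_cast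
    rw [show ((2:ZMod 2)) = 0 from rfl]
    ring

open scoped Classical in
lemma sum_inter_card {k : ℕ} {s t : Finset ℕ} (hs : s ⊆ Finset.Icc 1 (2*k)) :
    ∑ j : {j // j ∈ Finset.Icc 1 (2*k)},
      (if j.val ∈ s then (1:ZMod 2) else 0) * (if j.val ∈ t then 1 else 0)
      = ((s ∩ t).card : ZMod 2) := by
  rw [Finset.sum_coe_sort (Finset.Icc 1 (2*k))
    (fun j => (if j ∈ s then (1:ZMod 2) else 0) * (if j ∈ t then 1 else 0))]
  have h1 : ∀ j ∈ Finset.Icc 1 (2*k),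
      (if j ∈ s then (1:ZMod 2) else 0) * (if j ∈ t then 1 else 0)
        = if j ∈ s ∩ t then 1 else 0 := by
    intro j _
    by_cases h1 : j ∈ s <;> by_cases h2 : j ∈ t <;> simp [h1, h2, Finset.mem_inter]
  rw [Finset.sum_congr rfl h1, Finset.sum_ite_mem,
    Finset.inter_eq_right.mpr (subset_trans Finset.inter_subset_left hs)]
  simp

open scoped Classical in
lemma col_eq (k m : ℕ) (hk : 1 ≤ k) (hm : 1 ≤ m) (C : Fin m → Fin 3 → Lit)
    (X : Finset (ISVertex k m)) (hX : DC X) (y : ISVertex k m) (hy : y ∉ X) :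
    (fun x : ↥X => if (ISGraph k m C).Adj x.val y then (1:ZMod 2) else 0)
      = ∑ idx : GenIdx k, coef k m hm C X y idx • gen k m hm X idx := by
  funext x
  obtain ⟨xv, hxmem⟩ := x
  have hxy : xv ≠ y := fun h => hy (h ▸ hxmem)
  rw [Finset.sum_apply]
  simp only [Pi.smul_apply, smul_eq_mul]
  rw [Fintype.sum_sum_type, Fintype.sum_sum_type, Fin.sum_univ_one]
  rcases xv with ⟨i2, s2⟩ | t2 | ⟨i2, q2⟩ <;> rcases y with ⟨i1, s1⟩ | t1 | ⟨i1, q1⟩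
  · -- x = a(i2,s2), y = a(i1,s1)
    have hadj : (ISGraph k m C).Adj (Sum.inl (i2,s2)) (Sum.inl (i1,s1)) ↔
        i2 = i1 ∧ s2.val ∩ Finset.Icc 1 k = s1.val ∩ Finset.Icc 1 k := by
      rw [ISGraph, SimpleGraph.fromRel_adj]
      simp only [isRel]
      constructor
      · rintro ⟨-, h | h⟩
        · exact h
        · exact ⟨h.1.symm, h.2.symm⟩
      · exact fun h => ⟨hxy, Or.inl h⟩
    rw [if_congr hadj rfl rfl]
    simp only [gen_u_a, mul_zero, Finset.sum_const_zero, gen_d_apply, coef_v_a, gen_v_a,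
      reduceCtorEq, if_false, add_zero, zero_add]
    by_cases h : i2 = i1 ∧ s2.val ∩ Finset.Icc 1 k = s1.val ∩ Finset.Icc 1 k
    · have hjf : jfun k s2.val = jfun k s1.val := by rw [jfun, jfun, h.2]
      have hI2 : i2 = iStar k m hm X :=
        iStar_unique hX ⟨Sum.inl (i2,s2), hxmem, rfl⟩
          ⟨Sum.inl (i1,s1), hy, by simp [blockIdx, h.1.symm]⟩
      have hI1 : i1 = iStar k m hm X := h.1.symm.trans hI2
      rw [hI1] at hy
      rw [hI2] at hxmem
      have hJ1 : jfun k s1.val = jStar k m hm X := jStar_unique hX hy hxmem hjf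
      rw [if_pos h, if_pos ⟨hI1, hJ1⟩, if_pos ⟨hI2, hjf.trans hJ1⟩, one_mul]
    · rw [if_neg h]
      by_cases h1 : i1 = iStar k m hm X ∧ jfun k s1.val = jStar k m hm X
      · by_cases h2 : i2 = iStar k m hm X ∧ jfun k s2.val = jStar k m hm X
        · exfalso
          refine h ⟨h2.1.trans h1.1.symm, ?_⟩
          rw [SS_inter s2.property, SS_inter s1.property, h1.2, h2.2]
        · rw [if_neg h2, mul_zero]
      · rw [if_neg h1, zero_mul]
  · -- x = a, y = b : impossible
    exact absurd (hX _ _ (keyV_b_lt t1 (Sum.inl (i2,s2)) rfl) hxmem) hy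
  · -- x = a(i2,s2), y = c(i1,q1)
    have hnadj : ¬ (ISGraph k m C).Adj (Sum.inl (i2,s2)) (Sum.inr (Sum.inr (i1,q1))) := by
      rw [ISGraph, SimpleGraph.fromRel_adj]
      simp only [isRel]
      rintro ⟨-, h | h⟩
      · exact h
      · obtain ⟨h1, -⟩ := h
        subst h1
        exact absurd (hX _ _ (keyV_c_lt_a i1 q1 s2) hxmem) hy
    rw [if_neg hnadj]
    simp [gen_u_a, gen_d_apply, coef_v_c, gen_v_a]
  · -- x = b(t2), y = a(i1,s1)
    have hadj : (ISGraph k m C).Adj (Sum.inr (Sum.inl t2)) (Sum.inl (i1,s1)) ↔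
        Odd ((s1.val ∩ t2.val).card) := by
      rw [ISGraph, SimpleGraph.fromRel_adj]
      simp only [isRel]
      constructor
      · rintro ⟨-, h | h⟩
        · exact h.elim
        · exact h
      · exact fun h => ⟨hxy, Or.inr h⟩
    rw [if_congr hadj rfl rfl, ← cast_parity]
    simp only [gen_u_b, coef_u_a, gen_d_apply, gen_v_b, mul_zero, add_zero, Sum.inr.injEq,
      reduceCtorEq, if_false, Finset.sum_const_zero]
    exact (sum_inter_card (SS_subset s1.property)).symm
  · -- x = b, y = b
    have hnadj : ¬ (ISGraph k m C).Adj (Sum.inr (Sum.inl t2)) (Sum.inr (Sum.inl t1)) := by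
      rw [ISGraph, SimpleGraph.fromRel_adj]
      simp only [isRel]
      rintro ⟨-, h | h⟩ <;> exact h
    rw [if_neg hnadj]
    simp [coef_u_b, coef_d_b, coef_v_b]
  · -- x = b, y = c
    have hnadj : ¬ (ISGraph k m C).Adj (Sum.inr (Sum.inl t2)) (Sum.inr (Sum.inr (i1,q1))) := by
      rw [ISGraph, SimpleGraph.fromRel_adj]
      simp only [isRel]
      rintro ⟨-, h | h⟩ <;> exact h
    rw [if_neg hnadj]
    simp [coef_u_c, gen_d_apply, coef_v_c]
  · -- x = c(i2,q2), y = a(i1,s1)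
    have hadj : (ISGraph k m C).Adj (Sum.inr (Sum.inr (i2,q2))) (Sum.inl (i1,s1)) ↔
        i2 = i1 ∧ memSLit k (negLit (C i2 q2)) s1.val := by
      rw [ISGraph, SimpleGraph.fromRel_adj]
      simp only [isRel]
      constructor
      · rintro ⟨-, h | h⟩
        · exact h
        · exact h.elim
      · exact fun h => ⟨hxy, Or.inl h⟩
    rw [if_congr hadj rfl rfl]
    simp only [gen_u_c, mul_zero, Finset.sum_const_zero, gen_d_apply, coef_d_a, coef_v_a,
      gen_v_c, add_zero, zero_add, Sum.inr.injEq, Prod.mk.injEq]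
    by_cases hI2 : i2 = iStar k m hm X
    · have hsum : ∀ cf : Fin 3 → ZMod 2, (∑ q : Fin 3, cf q *
          (if i2 = iStar k m hm X ∧ q2 = q then 1 else 0)) = cf q2 := by
        intro cf
        simp [hI2, mul_ite, Finset.sum_ite_eq]
      rw [hsum]
      refine if_congr ?_ rfl rfl
      constructor
      · rintro ⟨h1, h2⟩
        exact ⟨h1.symm.trans hI2, by rw [← hI2]; exact h2⟩
      · rintro ⟨h1, h2⟩
        exact ⟨hI2.trans h1.symm, by rw [hI2]; exact h2⟩
    · have hz : ∀ q : Fin 3, (if i2 = iStar k m hm X ∧ q2 = q then (1:ZMod 2) else 0) = 0 :=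
        fun q => if_neg (fun h => hI2 h.1)
      rw [if_neg, Finset.sum_congr rfl (fun q _ => by rw [hz q, mul_zero]),
        Finset.sum_const_zero]
      rintro ⟨h1, -⟩
      exact hI2 (iStar_unique hX ⟨_, hxmem, rfl⟩
        ⟨Sum.inl (i1,s1), hy, by simp [blockIdx, h1.symm]⟩)
  · -- x = c, y = b : impossible
    exact absurd (hX _ _ (keyV_b_lt t1 (Sum.inr (Sum.inr (i2,q2))) rfl) hxmem) hy
  · -- x = c(i2,q2), y = c(i1,q1)
    have hadj : (ISGraph k m C).Adj (Sum.inr (Sum.inr (i2,q2))) (Sum.inr (Sum.inr (i1,q1))) ↔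
        i2 = i1 := by
      rw [ISGraph, SimpleGraph.fromRel_adj]
      simp only [isRel]
      constructor
      · rintro ⟨-, h | h⟩
        · exact h
        · exact h.symm
      · exact fun h => ⟨hxy, Or.inl h⟩
    rw [if_congr hadj rfl rfl]
    simp only [coef_u_c, zero_mul, Finset.sum_const_zero, gen_d_apply, coef_d_c, coef_v_c,
      add_zero, zero_add, Sum.inr.injEq, Prod.mk.injEq]
    by_cases hI2 : i2 = iStar k m hm X
    · have hsum : ∀ cf : Fin 3 → ZMod 2, (∑ q : Fin 3, cf q *
          (if i2 = iStar k m hm X ∧ q2 = q then 1 else 0)) = cf q2 := by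
        intro cf
        simp [hI2, mul_ite, Finset.sum_ite_eq]
      rw [hsum]
      refine if_congr ?_ rfl rfl
      constructor
      · intro h1
        refine ⟨h1.symm.trans hI2, fun hq => ?_⟩
        exact hxy (by rw [h1, hq])
      · rintro ⟨h1, -⟩
        exact hI2.trans h1.symm
    · have hz : ∀ q : Fin 3, (if i2 = iStar k m hm X ∧ q2 = q then (1:ZMod 2) else 0) = 0 :=
        fun q => if_neg (fun h => hI2 h.1)
      rw [if_neg, Finset.sum_congr rfl (fun q _ => by rw [hz q, mul_zero]),
        Finset.sum_const_zero]
      intro h1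
      exact hI2 (iStar_unique hX ⟨_, hxmem, rfl⟩
        ⟨Sum.inr (Sum.inr (i1,q1)), hy, by simp [blockIdx, h1.symm]⟩)

open scoped Classical in
lemma cutRank_le_main (k m : ℕ) (hk : 1 ≤ k) (hm : 1 ≤ m) (C : Fin m → Fin 3 → Lit)
    (X : Finset (ISVertex k m)) (hX : DC X) :
    cutRank (ISGraph k m C) X ≤ 2*k + 4 := by
  rw [cutRank, ← card_GenIdx k]
  apply rank_le_span _ (gen k m hm X)
  intro y
  have hcol : (Matrix.of fun (x : ↥X) (y : ↥(Xᶜ)) =>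
      if (ISGraph k m C).Adj x.val y.val then (1:ZMod 2) else 0).transpose y
      = fun x : ↥X => if (ISGraph k m C).Adj x.val y.val then (1:ZMod 2) else 0 := rfl
  rw [hcol, col_eq k m hk hm C X hX y.val (Finset.mem_compl.mp y.property)]
  exact Submodule.sum_mem _ fun i _ =>
    Submodule.smul_mem _ _ (Submodule.subset_span ⟨i, rfl⟩)


/-- the graph `G(φ)` of the independent-set reduction admits an enumeration
of its vertices all of whose prefix cuts have `𝔽₂`-rank at most `2k + 4`; in particular
its linear rank-width is at most `2k + 4`. -/
theorem ISGraph_linear_rankwidth (k m : ℕ) (hk : 1 ≤ k) (hm : 1 ≤ m)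
    (C : Fin m → Fin 3 → Lit) (hC : ∀ p q, LitOK k (C p q)) :
    ∃ e : Fin (Fintype.card (ISVertex k m)) ≃ ISVertex k m,
      ∀ p : ℕ, cutRank (ISGraph k m C) (enumPrefix e p) ≤ 2 * k + 4 := by
  classical
  let e0 : Fin (Fintype.card (ISVertex k m)) ≃ ISVertex k m :=
    (Fintype.equivFin (ISVertex k m)).symm
  let σ : Equiv.Perm (Fin (Fintype.card (ISVertex k m))) := Tuple.sort (keyV k m ∘ e0)
  refine ⟨(σ : Equiv.Perm _).trans e0, fun p => ?_⟩
  refine cutRank_le_main k m hk hm C _ ?_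
  intro v w hvw hw
  set e := (σ : Equiv.Perm _).trans e0 with he
  have hmem : ∀ u : ISVertex k m, u ∈ enumPrefix e p ↔ ((e.symm u : Fin _) : ℕ) < p := by
    intro u
    simp only [enumPrefix, Finset.mem_image, Finset.mem_filter, Finset.mem_univ, true_and]
    constructor
    · rintro ⟨i, hi, rfl⟩
      rwa [Equiv.symm_apply_apply]
    · intro h
      exact ⟨e.symm u, h, Equiv.apply_symm_apply _ _⟩
  rw [hmem] at hw ⊢
  by_contra hv
  push_neg at hv
  have hmono : Monotone (keyV k m ∘ e) := Tuple.monotone_sort (keyV k m ∘ e0)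
  have hle : e.symm w ≤ e.symm v := by
    rw [Fin.le_def]
    exact le_trans (le_of_lt hw) hv
  have h2 := hmono hle
  simp only [Function.comp_apply, Equiv.apply_symm_apply] at h2
  omega
end Star
end

section
/- Let G be a finite simple graph with a weight function w : V(G) → ℕ satisfying w(v) ≥ 1 for every vertex v, and let G' be the blow-up graph with vertex set {(v,i) : v ∈ V(G), 1 ≤ i ≤ w(v)} in which (u,i) and (v,j) are adjacent if and only if uv ∈ E(G). If (v_1,…,v_n) is an enumeration of V(G) of width at most w₀, then the enumeration of V(G') obtained by replacing each v_p by the block (v_p,1),…,(v_p,w(v_p)) has width at most w₀ + 1. -/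
/-- The blow-up of a weighted graph `(G, w)`: vertex `(v, i)` for `v ∈ V(G)` and
`1 ≤ i ≤ w v` (modelled as `i : Fin (w v)`); `(u,i)` and `(v,j)` are adjacent iff
`uv ∈ E(G)`.  In particular distinct copies of the same vertex are non-adjacent. -/
def blowup {V : Type*} (G : SimpleGraph V) (w : V → ℕ) :
    SimpleGraph (Σ v : V, Fin (w v)) where
  Adj x y := G.Adj x.1 y.1
  symm := ⟨fun _ _ h => G.adj_symm h⟩
  loopless := ⟨fun x h => G.irrefl h⟩

open Matrix Module

lemma rank_submatrix_cols_le {K : Type*} [Field K] {m n n' : Type*} [Fintype m] [Fintype n]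
    [Fintype n'] (A : Matrix m n K) (g : n' → n) : (A.submatrix id g).rank ≤ A.rank := by
  rw [rank_eq_finrank_span_cols, rank_eq_finrank_span_cols]
  have h : Set.range (A.submatrix id g)ᵀ ⊆ Set.range Aᵀ := by
    rintro _ ⟨j, rfl⟩; exact ⟨g j, rfl⟩
  exact Submodule.finrank_mono (Submodule.span_mono h)

lemma rank_submatrix_le' {K : Type*} [Field K] {m n m' n' : Type*} [Fintype m] [Fintype n]
    [Fintype m'] [Fintype n'] (A : Matrix m n K) (f : m' → m) (g : n' → n) :
    (A.submatrix f g).rank ≤ A.rank := by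
  calc ((A.submatrix f id).submatrix id g).rank ≤ (A.submatrix f id).rank :=
        rank_submatrix_cols_le _ _
    _ = ((A.submatrix f id)ᵀ).rank := (rank_transpose _).symm
    _ = (Aᵀ.submatrix id f).rank := rfl
    _ ≤ Aᵀ.rank := rank_submatrix_cols_le _ _
    _ = A.rank := rank_transpose _

lemma rank_fromColumns_le {K : Type*} [Field K] {m n₁ n₂ : Type*} [Fintype m] [Fintype n₁]
    [Fintype n₂] (A : Matrix m n₁ K) (B : Matrix m n₂ K) :
    (fromCols A B).rank ≤ A.rank + B.rank := by
  have h : LinearMap.range (fromCols A B).mulVecLin ≤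
      LinearMap.range A.mulVecLin ⊔ LinearMap.range B.mulVecLin := by
    rintro _ ⟨x, rfl⟩
    have hx : x = Sum.elim (x ∘ Sum.inl) (x ∘ Sum.inr) := by funext i; cases i <;> rfl
    rw [mulVecLin_apply, hx, fromCols_mulVec_sumElim]
    exact Submodule.add_mem_sup ⟨_, rfl⟩ ⟨_, rfl⟩
  calc (fromCols A B).rank
      ≤ finrank K ↥(LinearMap.range A.mulVecLin ⊔ LinearMap.range B.mulVecLin) :=
        Submodule.finrank_mono h
    _ ≤ A.rank + B.rank := Submodule.finrank_add_le_finrank_add_finrank _ _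

lemma mem_enumPrefix {V : Type*} [Fintype V] [DecidableEq V]
    (e : Fin (Fintype.card V) ≃ V) (p : ℕ) (v : V) :
    v ∈ enumPrefix e p ↔ (e.symm v : ℕ) < p := by
  simp only [enumPrefix, Finset.mem_image, Finset.mem_filter, Finset.mem_univ, true_and]
  constructor
  · rintro ⟨i, hi, rfl⟩; simpa using hi
  · intro h; exact ⟨e.symm v, h, e.apply_symm_apply v⟩


/-- if an enumeration `e` of `V(G)` has width at most `w₀` (every prefix
cut has `𝔽₂`-rank at most `w₀`), then the enumeration of the blow-up `G'` obtained by
replacing each vertex `v` by its block of `w v` copies (in order) has width at most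
`w₀ + 1`: each of its prefixes consists of the blocks of the first `p` vertices together
with the first `c` copies of the `(p+1)`-st vertex, and each such prefix cut has
`𝔽₂`-rank at most `w₀ + 1`. -/
theorem blowup_enum_width {V : Type*} [Fintype V] [DecidableEq V]
    (G : SimpleGraph V) (w : V → ℕ) (hw : ∀ v, 1 ≤ w v) (w₀ : ℕ)
    (e : Fin (Fintype.card V) ≃ V)
    (he : ∀ p : ℕ, cutRank G (enumPrefix e p) ≤ w₀) :
    ∀ p c : ℕ,
      cutRank (blowup G w)
        (Finset.univ.filter fun x : Σ v : V, Fin (w v) =>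
          ((e.symm x.1 : ℕ) < p ∨ ((e.symm x.1 : ℕ) = p ∧ (x.2 : ℕ) < c)))
        ≤ w₀ + 1 := by
  classical
  intro p c
  set X' : Finset (Σ v : V, Fin (w v)) :=
    Finset.univ.filter fun x : Σ v : V, Fin (w v) =>
      ((e.symm x.1 : ℕ) < p ∨ ((e.symm x.1 : ℕ) = p ∧ (x.2 : ℕ) < c)) with hX'
  by_cases hp : p < Fintype.card V
  · set vp : V := e ⟨p, hp⟩ with hvp
    set X : Finset V := enumPrefix e (p + 1) with hXdef
    set M : Matrix ↥X ↥(Xᶜ) (ZMod 2) :=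
      Matrix.of fun (x : ↥X) (y : ↥(Xᶜ)) =>
        if G.Adj x.val y.val then (1 : ZMod 2) else 0 with hM
    set C : Matrix ↥X Unit (ZMod 2) :=
      Matrix.of fun (x : ↥X) (_ : Unit) =>
        if G.Adj x.val vp then (1 : ZMod 2) else 0 with hC
    -- row map
    have hf : ∀ x : ↥X', x.1.1 ∈ X := by
      intro x
      have hx := (Finset.mem_filter.mp x.2).2
      rw [hXdef, mem_enumPrefix]
      rcases hx with h | ⟨h, _⟩
      · omega
      · omega
    -- column map
    have hg : ∀ y : ↥(X'ᶜ), (e.symm y.1.1 : ℕ) ≠ p → y.1.1 ∈ Xᶜ := by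
      intro y hne
      have hy := Finset.mem_compl.mp y.2
      have hy' : ¬(((e.symm y.1.1 : ℕ) < p) ∨
          ((e.symm y.1.1 : ℕ) = p ∧ ((y.1.2 : ℕ) < c))) := fun hc =>
        hy (Finset.mem_filter.mpr ⟨Finset.mem_univ _, hc⟩)
      push_neg at hy'
      rw [Finset.mem_compl, hXdef, mem_enumPrefix]
      omega
    set f : ↥X' → ↥X := fun x => ⟨x.1.1, hf x⟩ with hfdef
    set g : ↥(X'ᶜ) → ↥(Xᶜ) ⊕ Unit := fun y =>
      if h : (e.symm y.1.1 : ℕ) = p then Sum.inr () else Sum.inl ⟨y.1.1, hg y h⟩ with hgdef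
    have key : cutRank (blowup G w) X' = ((fromCols M C).submatrix f g).rank := by
      rw [cutRank]
      congr 1
      ext x y
      simp only [Matrix.submatrix_apply, Matrix.of_apply]
      by_cases h : (e.symm y.1.1 : ℕ) = p
      · have hy1 : y.1.1 = vp := by
          have : e.symm y.1.1 = (⟨p, hp⟩ : Fin (Fintype.card V)) := Fin.ext h
          rw [hvp, ← this, e.apply_symm_apply]
        rw [hgdef]
        simp only [h, dif_pos]
        rw [fromCols_apply_inr, hC]
        simp only [Matrix.of_apply]
        have : (blowup G w).Adj x.1 y.1 ↔ G.Adj x.1.1 vp := by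
          rw [← hy1]; exact Iff.rfl
        by_cases hA : (blowup G w).Adj x.1 y.1
        · rw [if_pos hA, if_pos (this.mp hA)]
        · rw [if_neg hA, if_neg (fun hc => hA (this.mpr hc))]
      · rw [hgdef]
        simp only [h, dif_neg, not_false_iff]
        rw [fromCols_apply_inl, hM]
        rfl
    rw [key]
    calc ((fromCols M C).submatrix f g).rank ≤ (fromCols M C).rank :=
          rank_submatrix_le' _ _ _
      _ ≤ M.rank + C.rank := rank_fromColumns_le _ _
      _ ≤ w₀ + 1 := by
          have h1 : M.rank ≤ w₀ := he (p + 1)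
          have h2 : C.rank ≤ 1 := by
            have := C.rank_le_card_width
            simpa using this
          omega
  · -- p ≥ card V : the complement of X' is empty
    have hempty : X'ᶜ = ∅ := by
      rw [Finset.eq_empty_iff_forall_notMem]
      intro x hx
      apply Finset.mem_compl.mp hx
      rw [hX', Finset.mem_filter]
      exact ⟨Finset.mem_univ _, Or.inl (by have := (e.symm x.1).2; omega)⟩
    rw [cutRank]
    refine le_trans (Matrix.rank_le_card_width _) ?_
    rw [Fintype.card_coe, hempty]
    simp
end

section
/- Let G be a finite simple graph and let G' be the true-twin doubling of G: the graph with vertex set {v, v̂ : v ∈ V(G)} and edge set {v v̂ : v ∈ V(G)} ∪ {uv, û v, u v̂, û v̂ : uv ∈ E(G)}. Then for every k ∈ ℕ the following are equivalent: (1) G admits an independent set of size k; (2) G' admits an induced matching consisting of k edges; (3) G' admits a set of 2k vertices that induces a forest. -/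
/-- The projection `V ⊕ V → V` sending both copies `v` and `v̂` to `v`. -/
def tproj {V : Type*} : V ⊕ V → V := Sum.elim id id

/-- The true-twin doubling `G'` of `G`: vertices `{v, v̂ : v ∈ V(G)}`, with edges
`v v̂` for every `v ∈ V(G)` and `uv, û v, u v̂, û v̂` for every `uv ∈ E(G)`. -/
def doubling {V : Type*} (G : SimpleGraph V) : SimpleGraph (V ⊕ V) :=
  SimpleGraph.fromRel fun x y => tproj x = tproj y ∨ G.Adj (tproj x) (tproj y)

/-- `M` is an induced matching of `H`: a set of edges of `H`, no two sharing an
endpoint, such that the subgraph of `H` induced by the endpoints of the edges of `M`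
has exactly the edges of `M`. -/
def IsInducedMatching {W : Type*} (H : SimpleGraph W) (M : Finset (Sym2 W)) : Prop :=
  (∀ e ∈ M, e ∈ H.edgeSet) ∧
  (∀ e ∈ M, ∀ f ∈ M, e ≠ f → ∀ x : W, x ∈ e → x ∉ f) ∧
  (∀ x y : W, (∃ e ∈ M, x ∈ e) → (∃ e ∈ M, y ∈ e) → (H.Adj x y ↔ s(x, y) ∈ M))

open SimpleGraph

lemma doubling_adj {V : Type*} (G : SimpleGraph V) (x y : V ⊕ V) :
    (doubling G).Adj x y ↔ x ≠ y ∧ (tproj x = tproj y ∨ G.Adj (tproj x) (tproj y)) := by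
  unfold doubling
  rw [fromRel_adj]
  constructor
  · rintro ⟨h, h2 | h2⟩
    · exact ⟨h, h2⟩
    · rcases h2 with h2 | h2
      · exact ⟨h, Or.inl h2.symm⟩
      · exact ⟨h, Or.inr h2.symm⟩
  · rintro ⟨h, h2⟩; exact ⟨h, Or.inl h2⟩

@[simp] lemma tproj_inl {V : Type*} (v : V) : tproj (Sum.inl v) = v := rfl
@[simp] lemma tproj_inr {V : Type*} (v : V) : tproj (Sum.inr v) = v := rfl

lemma eq_copy_of_tproj {V : Type*} {s : V ⊕ V} {v : V} (h : tproj s = v) :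
    s = Sum.inl v ∨ s = Sum.inr v := by
  cases s with
  | inl w => exact Or.inl (by simp_all)
  | inr w => exact Or.inr (by simp_all)

lemma triangle_not_acyclic {W : Type*} {H : SimpleGraph W} {a b c : W}
    (hab : H.Adj a b) (hbc : H.Adj b c) (hca : H.Adj c a) : ¬ H.IsAcyclic := by
  intro h
  refine h (Walk.cons hab (Walk.cons hbc (Walk.cons hca Walk.nil))) ?_
  have h1 : a ≠ b := hab.ne
  have h2 : b ≠ c := hbc.ne
  have h3 : c ≠ a := hca.ne
  rw [Walk.isCycle_def]
  refine ⟨?_, by simp, ?_⟩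
  · rw [Walk.isTrail_def]
    simp [Sym2.eq_iff]
    aesop
  · simp only [Walk.support_cons, Walk.support_nil, List.tail_cons, List.nodup_cons,
      List.mem_cons, List.mem_singleton, List.not_mem_nil, not_false_iff, List.nodup_nil,
      and_true, not_or]
    aesop

lemma acyclic_of_unique_nbr {W : Type*} {H : SimpleGraph W}
    (h : ∀ x y z, H.Adj x y → H.Adj x z → y = z) : H.IsAcyclic := by
  intro v c hc
  have h3 := hc.three_le_length
  cases c with
  | nil => simp at h3
  | cons hadj p =>
    rename_i w
    cases p with
    | nil => simp at h3
    | cons hadj2 p2 =>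
      rename_i u
      have huv : u = v := h w v u hadj.symm hadj2 |>.symm
      subst huv
      cases p2 with
      | nil => simp [Walk.length_cons] at h3
      | cons hadj3 p3 =>
        have hnd := hc.support_nodup
        simp only [Walk.support_cons, List.tail_cons, List.nodup_cons] at hnd
        exact hnd.2.1 (Walk.end_mem_support p3)

lemma acyclic_comap {A B : Type*} {HA : SimpleGraph A} {HB : SimpleGraph B}
    (f : HA →g HB) (hinj : Function.Injective f) (hB : HB.IsAcyclic) : HA.IsAcyclic := by
  intro v c hc
  exact hB (c.map f) (hc.map hinj)

lemma dist_ne_of_adj {W : Type*} {H : SimpleGraph W} (hH : H.IsAcyclic) {r u v : W}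
    (hru : H.Reachable r u) (hrv : H.Reachable r v) (huv : H.Adj u v) :
    H.dist r u ≠ H.dist r v := by
  classical
  intro heq
  obtain ⟨p, hp⟩ := hru.exists_walk_length_eq_dist
  obtain ⟨q, hq⟩ := hrv.exists_walk_length_eq_dist
  have hp' : p.bypass.length = H.dist r u :=
    le_antisymm (hp ▸ Walk.length_bypass_le p) (dist_le p.bypass)
  have hq' : q.bypass.length = H.dist r v :=
    le_antisymm (hq ▸ Walk.length_bypass_le q) (dist_le q.bypass)
  set P := p.bypass with hP
  have hPpath : P.IsPath := Walk.bypass_isPath p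
  have hvP : v ∉ P.support := by
    intro hv
    have hspec := Walk.take_spec P hv
    have hlen : (P.takeUntil v hv).length + (P.dropUntil v hv).length = P.length := by
      rw [← Walk.length_append, hspec]
    have h1 : H.dist r v ≤ (P.takeUntil v hv).length := dist_le _
    have h2 : (P.dropUntil v hv).length = 0 := by omega
    have := Walk.eq_of_length_eq_zero h2
    exact huv.ne this.symm
  have hvP' : v ∉ P.reverse.support := by rwa [Walk.support_reverse, List.mem_reverse]
  have hW : (Walk.cons huv.symm P.reverse).IsPath := (hPpath.reverse).cons hvP'
  have := hH.path_unique ⟨Walk.cons huv.symm P.reverse, hW⟩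
    ⟨q.bypass.reverse, (Walk.bypass_isPath q).reverse⟩
  have hlen : (Walk.cons huv.symm P.reverse).length = q.bypass.reverse.length :=
    congrArg Walk.length (congrArg Subtype.val this)
  rw [Walk.length_cons, Walk.length_reverse, Walk.length_reverse] at hlen
  omega

lemma exists_half_indep {W : Type*} [Fintype W] (H : SimpleGraph W) (hH : H.IsAcyclic) :
    ∃ I : Finset W, (∀ x ∈ I, ∀ y ∈ I, ¬H.Adj x y) ∧ Fintype.card W ≤ 2 * I.card := by
  classical
  set r : W → W := fun v => (H.connectedComponentMk v).out with hr
  have hreach : ∀ v, H.Reachable (r v) v := fun v =>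
    ConnectedComponent.exact (Quot.out_eq _)
  have hradj : ∀ u v, H.Adj u v → r u = r v := fun u v h =>
    congrArg Quot.out (ConnectedComponent.sound h.reachable)
  set c : W → ℕ := fun v => H.dist (r v) v % 2 with hc
  have hkey : ∀ u v, H.Adj u v → c u ≠ c v := by
    intro u v hadj
    have h1 := dist_ne_of_adj hH (hreach u) (hradj u v hadj ▸ hreach v) hadj
    have h2 : H.dist (r u) v ≤ H.dist (r u) u + 1 := by
      obtain ⟨p, hp⟩ := (hreach u).exists_walk_length_eq_dist
      calc H.dist (r u) v ≤ (p.concat hadj).length := dist_le _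
        _ = H.dist (r u) u + 1 := by rw [Walk.length_concat, hp]
    have h3 : H.dist (r u) u ≤ H.dist (r u) v + 1 := by
      obtain ⟨p, hp⟩ := ((hradj u v hadj) ▸ hreach v).exists_walk_length_eq_dist
      calc H.dist (r u) u ≤ (p.concat hadj.symm).length := dist_le _
        _ = H.dist (r u) v + 1 := by rw [Walk.length_concat, hp]
    show H.dist (r u) u % 2 ≠ H.dist (r v) v % 2
    rw [← hradj u v hadj]
    omega
  set I0 : Finset W := Finset.univ.filter (fun v => c v = 0) with hI0
  set I1 : Finset W := Finset.univ.filter (fun v => ¬ c v = 0) with hI1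
  have hcard : I0.card + I1.card = Fintype.card W := by
    rw [hI0, hI1, Finset.card_filter_add_card_filter_not]
    rfl
  have hind0 : ∀ x ∈ I0, ∀ y ∈ I0, ¬H.Adj x y := by
    intro x hx y hy hadj
    rw [hI0, Finset.mem_filter] at hx hy
    exact hkey x y hadj (hx.2.trans hy.2.symm)
  have hind1 : ∀ x ∈ I1, ∀ y ∈ I1, ¬H.Adj x y := by
    intro x hx y hy hadj
    rw [hI1, Finset.mem_filter] at hx hy
    have hx2 : c x = 1 := by
      have := Nat.mod_two_eq_zero_or_one (H.dist (r x) x)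
      rw [hc] at hx ⊢; simp only at *; omega
    have hy2 : c y = 1 := by
      have := Nat.mod_two_eq_zero_or_one (H.dist (r y) y)
      rw [hc] at hy ⊢; simp only at *; omega
    exact hkey x y hadj (hx2.trans hy2.symm)
  rcases le_total I0.card I1.card with h | h
  · exact ⟨I1, hind1, by omega⟩
  · exact ⟨I0, hind0, by omega⟩

lemma exists_half_indep_finset {W : Type*} [DecidableEq W] (H : SimpleGraph W) (S : Finset W)
    (hac : (H.induce (S : Set W)).IsAcyclic) :
    ∃ I : Finset W, I ⊆ S ∧ (∀ x ∈ I, ∀ y ∈ I, ¬H.Adj x y) ∧ S.card ≤ 2 * I.card := by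
  obtain ⟨I', hind, hcard⟩ := exists_half_indep (H.induce (S : Set W)) hac
  refine ⟨I'.image Subtype.val, ?_, ?_, ?_⟩
  · intro x hx
    obtain ⟨a, _, rfl⟩ := Finset.mem_image.1 hx
    exact Finset.mem_coe.1 a.2
  · intro x hx y hy hadj
    obtain ⟨a, ha, rfl⟩ := Finset.mem_image.1 hx
    obtain ⟨b, hb, rfl⟩ := Finset.mem_image.1 hy
    exact hind a ha b hb hadj
  · rw [Finset.card_image_of_injective _ Subtype.val_injective]
    simpa [Fintype.card_coe] using hcard

/-- for the true-twin doubling `G'` of `G` and every `k`, the following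
are equivalent: (1) `G` has an independent set of size `k`; (2) `G'` has an induced
matching of `k` edges; (3) `G'` has a set of `2k` vertices inducing a forest. -/
theorem doubling_indep_iff_inducedMatching_iff_forest
    {V : Type*} [Fintype V] [DecidableEq V] (G : SimpleGraph V) (k : ℕ) :
    ((∃ I : Finset V, IsIndepFinset G I ∧ I.card = k) ↔
      ∃ M : Finset (Sym2 (V ⊕ V)), IsInducedMatching (doubling G) M ∧ M.card = k) ∧
    ((∃ I : Finset V, IsIndepFinset G I ∧ I.card = k) ↔
      ∃ F : Finset (V ⊕ V), F.card = 2 * k ∧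
        ((doubling G).induce (F : Set (V ⊕ V))).IsAcyclic) := by
  classical
  -- (1) → (2)
  have h12 : (∃ I : Finset V, IsIndepFinset G I ∧ I.card = k) →
      ∃ M : Finset (Sym2 (V ⊕ V)), IsInducedMatching (doubling G) M ∧ M.card = k := by
    rintro ⟨I, hI, rfl⟩
    have hminj : Function.Injective (fun v : V => s(Sum.inl v, Sum.inr v)) := by
      intro a b h
      simp only [Sym2.eq_iff] at h
      rcases h with ⟨h1, _⟩ | ⟨h1, _⟩
      · exact Sum.inl_injective h1
      · exact (Sum.inl_ne_inr h1).elim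
    refine ⟨I.image (fun v => s(Sum.inl v, Sum.inr v)), ⟨?_, ?_, ?_⟩,
      Finset.card_image_of_injective _ hminj⟩
    · intro e he
      obtain ⟨v, hv, rfl⟩ := Finset.mem_image.1 he
      rw [mem_edgeSet, doubling_adj]
      simp
    · intro e he f hf hef x hxe hxf
      obtain ⟨v, hv, rfl⟩ := Finset.mem_image.1 he
      obtain ⟨w, hw, rfl⟩ := Finset.mem_image.1 hf
      have hvw : v ≠ w := fun h => hef (by rw [h])
      rw [Sym2.mem_iff] at hxe hxf
      rcases hxe with rfl | rfl <;> rcases hxf with h | h <;> simp_all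
    · intro x y hx hy
      obtain ⟨e, he, hxe⟩ := hx
      obtain ⟨f, hf, hyf⟩ := hy
      obtain ⟨v, hv, rfl⟩ := Finset.mem_image.1 he
      obtain ⟨w, hw, rfl⟩ := Finset.mem_image.1 hf
      rw [Sym2.mem_iff] at hxe hyf
      constructor
      · intro hadj
        rw [doubling_adj] at hadj
        obtain ⟨hne, hrel⟩ := hadj
        have hpx : tproj x = v := by rcases hxe with rfl | rfl <;> simp
        have hpy : tproj y = w := by rcases hyf with rfl | rfl <;> simp
        rw [hpx, hpy] at hrel
        rcases hrel with rfl | hGadj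
        · rcases hxe with rfl | rfl <;> rcases hyf with rfl | rfl
          · exact absurd rfl hne
          · exact Finset.mem_image.2 ⟨v, hv, rfl⟩
          · rw [Sym2.eq_swap]; exact Finset.mem_image.2 ⟨v, hv, rfl⟩
          · exact absurd rfl hne
        · exact absurd hGadj (hI v hv w hw)
      · intro hmem
        obtain ⟨u, hu, hequ⟩ := Finset.mem_image.1 hmem
        rw [Sym2.eq_iff] at hequ
        rw [doubling_adj]
        rcases hequ with ⟨rfl, rfl⟩ | ⟨rfl, rfl⟩ <;> simp
  -- (2) → (1)
  have h21 : (∃ M : Finset (Sym2 (V ⊕ V)), IsInducedMatching (doubling G) M ∧ M.card = k) →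
      ∃ I : Finset V, IsIndepFinset G I ∧ I.card = k := by
    rintro ⟨M, ⟨hedge, hdisj, hindc⟩, rfl⟩
    have hout : ∀ e : Sym2 (V ⊕ V), (Quot.out e).1 ∈ e := by
      intro e
      conv in e => rw [← Quot.out_eq e]
      exact Sym2.mem_mk_left _ _
    have key : ∀ e ∈ M, ∀ f ∈ M, e ≠ f → ∀ x, x ∈ e → ∀ y, y ∈ f →
        ¬(tproj x = tproj y ∨ G.Adj (tproj x) (tproj y)) := by
      intro e he f hf hef x hx y hy hrel
      have hxy : x ≠ y := fun h => hdisj e he f hf hef x hx (h ▸ hy)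
      have hadj : (doubling G).Adj x y := (doubling_adj G x y).2 ⟨hxy, hrel⟩
      have hmem : s(x, y) ∈ M := (hindc x y ⟨e, he, hx⟩ ⟨f, hf, hy⟩).1 hadj
      have hxe : s(x, y) = e := by
        by_contra hne
        exact hdisj s(x, y) hmem e he hne x (Sym2.mem_mk_left x y) hx
      have hye : y ∈ e := hxe ▸ Sym2.mem_mk_right x y
      exact hdisj e he f hf hef y hye hy
    set g : Sym2 (V ⊕ V) → V := fun e => tproj (Quot.out e).1 with hg
    have hginj : Set.InjOn g ↑M := by
      intro e he f hf hgef
      by_contra hef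
      exact key e (Finset.mem_coe.1 he) f (Finset.mem_coe.1 hf) hef _ (hout e) _ (hout f)
        (Or.inl hgef)
    refine ⟨M.image g, ?_, Finset.card_image_of_injOn hginj⟩
    intro a ha b hb hadj
    obtain ⟨e, he, rfl⟩ := Finset.mem_image.1 ha
    obtain ⟨f, hf, rfl⟩ := Finset.mem_image.1 hb
    rcases eq_or_ne e f with rfl | hef
    · exact G.irrefl hadj
    · exact key e he f hf hef _ (hout e) _ (hout f) (Or.inr hadj)
  -- (1) → (3)
  have h13 : (∃ I : Finset V, IsIndepFinset G I ∧ I.card = k) →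
      ∃ F : Finset (V ⊕ V), F.card = 2 * k ∧
        ((doubling G).induce (F : Set (V ⊕ V))).IsAcyclic := by
    rintro ⟨I, hI, rfl⟩
    refine ⟨I.image Sum.inl ∪ I.image Sum.inr, ?_, ?_⟩
    · rw [Finset.card_union_of_disjoint, Finset.card_image_of_injective _ Sum.inl_injective,
        Finset.card_image_of_injective _ Sum.inr_injective, two_mul]
      rw [Finset.disjoint_left]
      rintro x hx1 hx2
      obtain ⟨v, _, rfl⟩ := Finset.mem_image.1 hx1
      obtain ⟨w, _, h⟩ := Finset.mem_image.1 hx2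
      exact Sum.inl_ne_inr h.symm
    · set F : Finset (V ⊕ V) := I.image Sum.inl ∪ I.image Sum.inr with hF
      have hmemF : ∀ x : V ⊕ V, x ∈ F → tproj x ∈ I := by
        intro x hx
        rw [hF, Finset.mem_union] at hx
        rcases hx with hx | hx <;> obtain ⟨v, hv, rfl⟩ := Finset.mem_image.1 hx <;> simpa
      apply acyclic_of_unique_nbr
      rintro ⟨x, hx⟩ ⟨y, hy⟩ ⟨z, hz⟩ hxy hxz
      have hxy' : (doubling G).Adj x y := hxy
      have hxz' : (doubling G).Adj x z := hxz
      rw [doubling_adj] at hxy' hxz'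
      have hxI : tproj x ∈ I := hmemF x (Finset.mem_coe.1 hx)
      have hyI : tproj y ∈ I := hmemF y (Finset.mem_coe.1 hy)
      have hzI : tproj z ∈ I := hmemF z (Finset.mem_coe.1 hz)
      have hpy : tproj y = tproj x :=
        (hxy'.2.resolve_right (hI _ hxI _ hyI)).symm
      have hpz : tproj z = tproj x :=
        (hxz'.2.resolve_right (hI _ hxI _ hzI)).symm
      apply Subtype.ext
      show y = z
      obtain hy' | hy' := eq_copy_of_tproj hpy <;> obtain hz' | hz' := eq_copy_of_tproj hpz
      · rw [hy', hz']
      · exfalso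
        obtain hx' | hx' := eq_copy_of_tproj (rfl : tproj x = tproj x)
        · exact hxy'.1 (hx'.trans hy'.symm)
        · exact hxz'.1 (hx'.trans hz'.symm)
      · exfalso
        obtain hx' | hx' := eq_copy_of_tproj (rfl : tproj x = tproj x)
        · exact hxz'.1 (hx'.trans hz'.symm)
        · exact hxy'.1 (hx'.trans hy'.symm)
      · rw [hy', hz']
  -- (3) → (1)
  have h31 : (∃ F : Finset (V ⊕ V), F.card = 2 * k ∧
        ((doubling G).induce (F : Set (V ⊕ V))).IsAcyclic) →
      ∃ I : Finset V, IsIndepFinset G I ∧ I.card = k := by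
    rintro ⟨F, hFc, hFac⟩
    set F1 : Finset V := Finset.univ.filter (fun v => Sum.inl v ∈ F) with hF1
    set F2 : Finset V := Finset.univ.filter (fun v => Sum.inr v ∈ F) with hF2
    have hm1 : ∀ v, v ∈ F1 ↔ Sum.inl v ∈ F := by intro v; simp [hF1]
    have hm2 : ∀ v, v ∈ F2 ↔ Sum.inr v ∈ F := by intro v; simp [hF2]
    have hsplit : F = F1.image Sum.inl ∪ F2.image Sum.inr := by
      ext x
      cases x with
      | inl v => simp [hm1 v]
      | inr v => simp [hm2 v]
    have hFcard : F.card = F1.card + F2.card := by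
      rw [hsplit, Finset.card_union_of_disjoint, Finset.card_image_of_injective _ Sum.inl_injective,
        Finset.card_image_of_injective _ Sum.inr_injective]
      rw [Finset.disjoint_left]
      rintro x hx1 hx2
      obtain ⟨v, _, rfl⟩ := Finset.mem_image.1 hx1
      obtain ⟨w, _, h⟩ := Finset.mem_image.1 hx2
      exact Sum.inl_ne_inr h.symm
    set A : Finset V := F1 ∪ F2 with hA
    set D : Finset V := F1 ∩ F2 with hD
    have hADcard : A.card + D.card = 2 * k := by
      rw [hA, hD, Finset.card_union_add_card_inter, ← hFcard, hFc]
    set ι : V → V ⊕ V := fun v => if Sum.inl v ∈ F then Sum.inl v else Sum.inr v with hι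
    have hιproj : ∀ v, tproj (ι v) = v := by
      intro v; rw [hι]; dsimp only; split <;> simp
    have hιF : ∀ v ∈ A, ι v ∈ F := by
      intro v hv
      rw [hA, Finset.mem_union, hm1, hm2] at hv
      rw [hι]; dsimp only; split
      · assumption
      · tauto
    -- no vertex doubled in F is G-adjacent to any vertex touched by F
    have hDA : ∀ v ∈ D, ∀ w ∈ A, ¬ G.Adj v w := by
      intro v hv w hw hadj
      rw [hD, Finset.mem_inter, hm1, hm2] at hv
      have hwv : w ≠ v := hadj.ne'
      have h1 : Sum.inl v ∈ (F : Set (V ⊕ V)) := hv.1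
      have h2 : Sum.inr v ∈ (F : Set (V ⊕ V)) := hv.2
      have h3 : ι w ∈ (F : Set (V ⊕ V)) := hιF w hw
      have hπ : tproj (ι w) = w := hιproj w
      have e1 : (doubling G).Adj (Sum.inl v) (Sum.inr v) := by
        rw [doubling_adj]; simp
      have e2 : (doubling G).Adj (Sum.inr v) (ι w) := by
        rw [doubling_adj]
        refine ⟨?_, Or.inr ?_⟩
        · intro h
          apply hwv
          rw [← hπ, ← h]; simp
        · rw [tproj_inr, hπ]; exact hadj
      have e3 : (doubling G).Adj (ι w) (Sum.inl v) := by
        rw [doubling_adj]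
        refine ⟨?_, Or.inr ?_⟩
        · intro h
          apply hwv
          rw [← hπ, h]; simp
        · rw [tproj_inl, hπ]; exact hadj.symm
      exact triangle_not_acyclic (H := (doubling G).induce (F : Set (V ⊕ V)))
        (a := ⟨Sum.inl v, h1⟩) (b := ⟨Sum.inr v, h2⟩) (c := ⟨ι w, h3⟩) e1 e2 e3 hFac
    set S : Finset V := A \ D with hS
    have hSsubA : S ⊆ A := Finset.sdiff_subset
    -- the induced subgraph of G on S is acyclic
    have hSac : (G.induce (S : Set V)).IsAcyclic := by
      have hadjmap : ∀ a b : (S : Set V), (G.induce (S : Set V)).Adj a b →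
          ((doubling G).induce (F : Set (V ⊕ V))).Adj
            ⟨ι a.1, hιF a.1 (hSsubA (Finset.mem_coe.1 a.2))⟩
            ⟨ι b.1, hιF b.1 (hSsubA (Finset.mem_coe.1 b.2))⟩ := by
        rintro a b hab
        have hab' : G.Adj a.1 b.1 := hab
        show (doubling G).Adj (ι a.1) (ι b.1)
        rw [doubling_adj]
        constructor
        · intro h
          exact hab'.ne (by rw [← hιproj a.1, h, hιproj])
        · rw [hιproj, hιproj]; exact Or.inr hab'
      let f : G.induce (S : Set V) →g (doubling G).induce (F : Set (V ⊕ V)) :=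
        ⟨fun a => ⟨ι a.1, hιF a.1 (hSsubA (Finset.mem_coe.1 a.2))⟩, fun h => hadjmap _ _ h⟩
      have hfinj : Function.Injective f := by
        rintro a b hab
        apply Subtype.ext
        have : ι a.1 = ι b.1 := congrArg Subtype.val hab
        rw [← hιproj a.1, this, hιproj]
      exact acyclic_comap f hfinj hFac
    obtain ⟨I', hI'S, hI'ind, hI'card⟩ := exists_half_indep_finset G S hSac
    have hdisjDI : Disjoint D I' := by
      rw [Finset.disjoint_left]
      intro a haD haI
      exact (Finset.mem_sdiff.1 (hI'S haI)).2 haD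
    have hDsubA : D ⊆ A := by rw [hA, hD]; exact (Finset.inter_subset_left).trans Finset.subset_union_left
    have hJind : ∀ x ∈ D ∪ I', ∀ y ∈ D ∪ I', ¬ G.Adj x y := by
      intro x hx y hy hadj
      rw [Finset.mem_union] at hx hy
      rcases hx with hx | hx
      · rcases hy with hy | hy
        · exact hDA x hx y (hDsubA hy) hadj
        · exact hDA x hx y (hSsubA (hI'S hy)) hadj
      · rcases hy with hy | hy
        · exact hDA y hy x (hSsubA (hI'S hx)) hadj.symm
        · exact hI'ind x hx y hy hadj
    have hScard : A.card = S.card + D.card := by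
      have hle := Finset.card_le_card hDsubA
      rw [hS, Finset.card_sdiff_of_subset hDsubA]
      omega
    have hk : k ≤ (D ∪ I').card := by
      rw [Finset.card_union_of_disjoint hdisjDI]
      omega
    obtain ⟨J, hJsub, hJcard⟩ := Finset.exists_subset_card_eq hk
    exact ⟨J, fun x hx y hy => hJind x (hJsub hx) y (hJsub hy), hJcard⟩
  exact ⟨⟨h12, h21⟩, ⟨h13, h31⟩⟩
end
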